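/- arXiv:1306.3459 — 9 statements merged into one kernel-verified Lean document; each statement's English description precedes it below -/
import Mathlib

section
/- Let A be an invertible Hermitian N×N complex matrix, let m ≥ 1 be an integer and ε > 0, and set C_m = 1/(m!·2^{m−1}) and K = C_m/N. If A has at least m eigenvalues, counted with multiplicity, in the open interval (−ε, ε), then there exist index subsets α, β ⊆ {1,…,N}, each of cardinality m, such that the m×m matrix A⁻¹[α,β]·A⁻¹[β,α] − (K/ε)²·I_m is positive definite. -/
/-!
Write `M = A⁻¹` and `D_j` for the largest modulus of a `j × j` minor of `M`. The eigenvectors of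
`A` for its `m` eigenvalues in `(-ε, ε)` span a space on which `‖M x‖ ≥ ‖x‖ / r` for some `r < ε`,
so for any `j < m` prescribed rows it contains `x ≠ 0` with `M x` vanishing on those rows. Taking
the rows of a maximal `j`-minor `B`, the Schur complement `S` of `B` in `M` satisfies `S x = M x`,
so some entry of `S` has modulus at least `1 / (r N)`; bordering `B` by that entry multiplies its
determinant by it, whence `D_j ≤ r N D_{j+1}`. For a maximal `m`-minor `B₁ = M[α, β]` the
adjugate formula then bounds every entry of `B₁⁻¹` by `D_{m-1} / D_m ≤ r N`, so
`‖B₁ᴴ x‖ ≥ ‖x‖ / (m r N)`, while `M[β, α] = B₁ᴴ` because `M` is Hermitian and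
`K / ε < 1 / (m r N)`.
-/

open Matrix
open scoped ComplexOrder

/-- Number of eigenvalues (with multiplicity) of a Hermitian matrix in the open
interval `(a, b)`. -/
noncomputable def eigCountIoo {n : Type*} [Fintype n] [DecidableEq n]
    (M : Matrix n n ℂ) (a b : ℝ) : ℕ :=
  if hM : M.IsHermitian then Nat.card {i : n // hM.eigenvalues i ∈ Set.Ioo a b} else 0

variable {𝕜 : Type*} [RCLike 𝕜] {n : Type*}

section L2

variable [Fintype n]

noncomputable def l2NormSq (x : n → 𝕜) : ℝ := ∑ i, ‖x i‖ ^ 2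

@[simp]
lemma l2NormSq_zero : l2NormSq (0 : n → 𝕜) = 0 := by simp [l2NormSq]

lemma l2NormSq_nonneg (x : n → 𝕜) : 0 ≤ l2NormSq x := by
  unfold l2NormSq; positivity

lemma l2NormSq_pos {x : n → 𝕜} (hx : x ≠ 0) : 0 < l2NormSq x := by
  obtain ⟨i, hi⟩ := Function.ne_iff.mp hx
  exact Finset.sum_pos' (fun j _ => by positivity)
    ⟨i, Finset.mem_univ i, pow_pos (norm_pos_iff.mpr hi) 2⟩

lemma star_dotProduct_self_eq_l2NormSq (x : n → 𝕜) : star x ⬝ᵥ x = (l2NormSq x : 𝕜) := by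
  simp only [dotProduct, Pi.star_apply, l2NormSq, RCLike.ofReal_sum, RCLike.ofReal_pow]
  exact Finset.sum_congr rfl fun i _ => RCLike.conj_mul (x i)

lemma l2NormSq_mulVec_of_star_mul_self [DecidableEq n] {U : Matrix n n 𝕜}
    (hU : star U * U = 1) (x : n → 𝕜) : l2NormSq (U *ᵥ x) = l2NormSq x := by
  have h : star (U *ᵥ x) ⬝ᵥ (U *ᵥ x) = star x ⬝ᵥ x := by
    rw [star_mulVec, dotProduct_mulVec, vecMul_vecMul, ← star_eq_conjTranspose, hU, vecMul_one]
  rw [star_dotProduct_self_eq_l2NormSq, star_dotProduct_self_eq_l2NormSq] at h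
  exact_mod_cast h

lemma l2NormSq_mulVec_le {m : Type*} [Fintype m] (S : Matrix m n 𝕜) {q : ℝ}
    (hS : ∀ i j, ‖S i j‖ ≤ q) (x : n → 𝕜) :
    l2NormSq (S *ᵥ x) ≤ Fintype.card m * Fintype.card n * q ^ 2 * l2NormSq x := by
  have hrow (i : m) : ‖(S *ᵥ x) i‖ ^ 2 ≤ Fintype.card n * q ^ 2 * l2NormSq x := by
    have hsum : ‖(S *ᵥ x) i‖ ≤ ∑ j, ‖S i j‖ * ‖x j‖ :=
      (norm_sum_le _ _).trans_eq (by simp only [norm_mul])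
    calc ‖(S *ᵥ x) i‖ ^ 2 ≤ (∑ j, ‖S i j‖ * ‖x j‖) ^ 2 := by gcongr
      _ ≤ (∑ j, ‖S i j‖ ^ 2) * l2NormSq x := Finset.sum_mul_sq_le_sq_mul_sq _ _ _
      _ ≤ (∑ _j : n, q ^ 2) * l2NormSq x := by
          gcongr with j
          · exact l2NormSq_nonneg x
          · exact hS i j
      _ = Fintype.card n * q ^ 2 * l2NormSq x := by simp
  calc l2NormSq (S *ᵥ x) ≤ ∑ _i : m, Fintype.card n * q ^ 2 * l2NormSq x :=
        Finset.sum_le_sum fun i _ => hrow i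
    _ = Fintype.card m * Fintype.card n * q ^ 2 * l2NormSq x := by simp [mul_assoc]

lemma exists_ne_zero_mulVec_eq_zero_of_card_lt [DecidableEq n] {m : Type*} [Fintype m]
    (R : Matrix m n 𝕜) (T : Finset n) (hT : Fintype.card m < T.card) :
    ∃ c : n → 𝕜, c ≠ 0 ∧ (∀ i ∉ T, c i = 0) ∧ R *ᵥ c = 0 := by
  let extendByZero : (T → 𝕜) →ₗ[𝕜] (n → 𝕜) :=
    LinearMap.pi fun i => if h : i ∈ T then LinearMap.proj ⟨i, h⟩ else 0
  have hker : LinearMap.ker (R.mulVecLin ∘ₗ extendByZero) ≠ ⊥ :=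
    LinearMap.ker_ne_bot_of_finrank_lt (by simpa using hT)
  obtain ⟨c, hc, hc0⟩ := (Submodule.ne_bot_iff _).mp hker
  refine ⟨extendByZero c, fun h => hc0 (funext fun i => ?_), fun i hi => by
    simp [extendByZero, hi], hc⟩
  simpa [extendByZero] using congrFun h i

end L2

lemma Finset.exists_perm_eq_orderIsoOfFin {α : Type*} [LinearOrder α] {m : ℕ} {f : Fin m → α}
    (hf : f.Injective) (h : (Finset.univ.image f).card = m) :
    ∃ σ : Equiv.Perm (Fin m), ∀ i, f i = (Finset.univ.image f).orderIsoOfFin h (σ i) := by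
  let g : Fin m → Finset.univ.image f := fun i => ⟨f i, Finset.mem_image_of_mem f (by simp)⟩
  have hinj : ((Finset.univ.image f).orderIsoOfFin h).symm ∘ g |>.Injective :=
    (OrderIso.injective _).comp fun i j hij => hf (congrArg Subtype.val hij)
  exact ⟨Equiv.ofBijective _ (Finite.injective_iff_bijective.mp hinj), fun i => by simp [g]⟩

namespace Matrix

def HasExpandingVector [Fintype n] (M : Matrix n n 𝕜) (r : ℝ) (j : ℕ) : Prop :=
  ∀ w : Fin j → n, ∃ x : n → 𝕜, x ≠ 0 ∧ (∀ a, (M *ᵥ x) (w a) = 0) ∧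
    l2NormSq x ≤ r ^ 2 * l2NormSq (M *ᵥ x)

section SchurComplement

variable {R : Type*} [Field R] {ι : Type*} [Fintype ι] [DecidableEq ι]

noncomputable def minorSchurCompl (M : Matrix n n R) (f g : ι → n) : Matrix n n R :=
  M - M.submatrix id g * (M.submatrix f g)⁻¹ * M.submatrix f id

lemma minorSchurCompl_mulVec [Fintype n] (M : Matrix n n R) (f g : ι → n) {x : n → R}
    (hx : ∀ a, (M *ᵥ x) (f a) = 0) : minorSchurCompl M f g *ᵥ x = M *ᵥ x := by
  have hfx : M.submatrix f id *ᵥ x = 0 := funext hx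
  rw [minorSchurCompl, sub_mulVec, ← mulVec_mulVec, hfx, mulVec_zero, sub_zero]

lemma det_submatrix_sumElim (M : Matrix n n R) {f g : ι → n}
    (hdet : IsUnit (M.submatrix f g).det) (i j : n) :
    (M.submatrix (Sum.elim f fun _ : Fin 1 => i) (Sum.elim g fun _ : Fin 1 => j)).det =
      (M.submatrix f g).det * minorSchurCompl M f g i j := by
  have := (M.submatrix f g).invertibleOfIsUnitDet hdet
  have hblocks : M.submatrix (Sum.elim f fun _ : Fin 1 => i) (Sum.elim g fun _ : Fin 1 => j) =
      fromBlocks (M.submatrix f g) (M.submatrix f fun _ : Fin 1 => j)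
        (M.submatrix (fun _ : Fin 1 => i) g) (of fun _ _ => M i j) := by
    ext (a | a) (b | b) <;> rfl
  rw [hblocks, det_fromBlocks₁₁, det_fin_one, invOf_eq_nonsing_inv]
  simp [minorSchurCompl, mul_apply]

end SchurComplement

noncomputable def maxMinorNorm (M : Matrix n n 𝕜) (k : ℕ) : ℝ :=
  ⨆ p : (Fin k → n) × (Fin k → n), ‖(M.submatrix p.1 p.2).det‖

variable {M : Matrix n n 𝕜}

lemma maxMinorNorm_zero : maxMinorNorm M 0 = 1 := by
  simp [maxMinorNorm]

lemma norm_det_submatrix_le_maxMinorNorm [Finite n] {k : ℕ} (f g : Fin k → n) :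
    ‖(M.submatrix f g).det‖ ≤ maxMinorNorm M k :=
  le_ciSup (f := fun p : (Fin k → n) × (Fin k → n) => ‖(M.submatrix p.1 p.2).det‖)
    (Set.finite_range _).bddAbove (f, g)

lemma exists_norm_det_submatrix_eq_maxMinorNorm [Finite n] {k : ℕ} (h : 0 < maxMinorNorm M k) :
    ∃ f g : Fin k → n, ‖(M.submatrix f g).det‖ = maxMinorNorm M k := by
  have : Nonempty ((Fin k → n) × (Fin k → n)) := by
    by_contra hempty
    rw [not_nonempty_iff] at hempty
    simp [maxMinorNorm] at h
  obtain ⟨⟨f, g⟩, hfg⟩ := exists_eq_ciSup_of_finite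
    (f := fun p : (Fin k → n) × (Fin k → n) => ‖(M.submatrix p.1 p.2).det‖)
  exact ⟨f, g, hfg⟩

theorem maxMinorNorm_le_mul_succ [Fintype n] {r : ℝ} (hr : 0 ≤ r) {k : ℕ}
    (hM : M.HasExpandingVector r k) (hpos : 0 < maxMinorNorm M k) :
    maxMinorNorm M k ≤ r * Fintype.card n * maxMinorNorm M (k + 1) := by
  obtain ⟨f, g, hfg⟩ := exists_norm_det_submatrix_eq_maxMinorNorm hpos
  have hdet : IsUnit (M.submatrix f g).det :=
    isUnit_iff_ne_zero.mpr (norm_pos_iff.mp (hfg ▸ hpos))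
  set S := minorSchurCompl M f g
  obtain ⟨x, hx0, hxf, hx⟩ := hM f
  have : Nonempty n := ⟨(Function.ne_iff.mp hx0).choose⟩
  obtain ⟨⟨i, j⟩, hij⟩ := Finite.exists_max fun p : n × n => ‖S p.1 p.2‖
  have hS : 1 ≤ r * Fintype.card n * ‖S i j‖ := by
    have hSx := l2NormSq_mulVec_le S (fun a b => hij (a, b)) x
    rw [minorSchurCompl_mulVec M f g hxf] at hSx
    have hsq : l2NormSq x * 1 ≤ l2NormSq x * (r * Fintype.card n * ‖S i j‖) ^ 2 :=
      calc l2NormSq x * 1 ≤ r ^ 2 * l2NormSq (M *ᵥ x) := by rw [mul_one]; exact hx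
        _ ≤ r ^ 2 * (Fintype.card n * Fintype.card n * ‖S i j‖ ^ 2 * l2NormSq x) := by gcongr
        _ = l2NormSq x * (r * Fintype.card n * ‖S i j‖) ^ 2 := by ring
    have habs := (one_le_sq_iff_one_le_abs _).mp (le_of_mul_le_mul_left hsq (l2NormSq_pos hx0))
    rwa [abs_of_nonneg (by positivity)] at habs
  have hborder : ‖(M.submatrix f g).det * S i j‖ ≤ maxMinorNorm M (k + 1) := by
    rw [← det_submatrix_sumElim M hdet, ← det_submatrix_equiv_self finSumFinEquiv.symm]
    exact norm_det_submatrix_le_maxMinorNorm (M := M) _ _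
  calc maxMinorNorm M k = ‖(M.submatrix f g).det‖ * 1 := by rw [hfg, mul_one]
    _ ≤ ‖(M.submatrix f g).det‖ * (r * Fintype.card n * ‖S i j‖) := by gcongr
    _ = r * Fintype.card n * ‖(M.submatrix f g).det * S i j‖ := by rw [norm_mul]; ring
    _ ≤ r * Fintype.card n * maxMinorNorm M (k + 1) := by gcongr

theorem maxMinorNorm_pos [Fintype n] {r : ℝ} (hr : 0 ≤ r) {m : ℕ}
    (hM : ∀ j < m, M.HasExpandingVector r j) : ∀ j ≤ m, 0 < maxMinorNorm M j
  | 0, _ => by rw [maxMinorNorm_zero]; exact one_pos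
  | j + 1, hj => by
    have hprev := maxMinorNorm_pos hr hM j (by omega)
    have hstep := maxMinorNorm_le_mul_succ hr (hM j hj) hprev
    exact pos_of_mul_pos_right (hprev.trans_le hstep) (by positivity)

lemma norm_inv_submatrix_apply_le [Finite n] {k : ℕ} (F G : Fin (k + 1) → n)
    (i j : Fin (k + 1)) :
    ‖(M.submatrix F G)⁻¹ i j‖ ≤ maxMinorNorm M k / ‖(M.submatrix F G).det‖ := by
  rw [inv_def, smul_apply, smul_eq_mul, Ring.inverse_eq_inv', norm_mul, norm_inv,
    adjugate_fin_succ_eq_det_submatrix, norm_mul, norm_pow, norm_neg, norm_one, one_pow,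
    one_mul, submatrix_submatrix, inv_mul_eq_div]
  gcongr
  exact norm_det_submatrix_le_maxMinorNorm (M := M) _ _

lemma norm_det_submatrix_comp_perm {k : ℕ} (M : Matrix n n 𝕜) (f g : Fin k → n)
    (σ τ : Equiv.Perm (Fin k)) :
    ‖(M.submatrix (f ∘ σ) (g ∘ τ)).det‖ = ‖(M.submatrix f g).det‖ := by
  have hsub : M.submatrix (f ∘ σ) (g ∘ τ) = ((M.submatrix f g).submatrix σ id).submatrix id τ :=
    rfl
  have hsign (π : Equiv.Perm (Fin k)) : ‖((Equiv.Perm.sign π : ℤ) : 𝕜)‖ = 1 := by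
    rcases Int.units_eq_one_or (Equiv.Perm.sign π) with h | h <;> simp [h]
  rw [hsub, det_permute', det_permute, norm_mul, norm_mul, hsign, hsign, one_mul, one_mul]

lemma injective_of_det_submatrix_ne_zero {k : ℕ} {M : Matrix n n 𝕜}
    {f g : Fin k → n} (h : (M.submatrix f g).det ≠ 0) : f.Injective ∧ g.Injective :=
  ⟨fun a b hab => by_contra fun hne =>
      h (det_zero_of_row_eq hne (funext fun c => by simp [hab])),
    fun a b hab => by_contra fun hne => h (det_zero_of_column_eq hne fun c => by simp [hab])⟩

theorem exists_finset_norm_det_eq_maxMinorNorm {N k : ℕ} {M : Matrix (Fin N) (Fin N) 𝕜}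
    (h : 0 < maxMinorNorm M k) :
    ∃ (α β : Finset (Fin N)) (hα : α.card = k) (hβ : β.card = k),
      ‖(M.submatrix (fun i => (α.orderIsoOfFin hα i : Fin N))
        (fun j => (β.orderIsoOfFin hβ j : Fin N))).det‖ = maxMinorNorm M k := by
  obtain ⟨f, g, hfg⟩ := exists_norm_det_submatrix_eq_maxMinorNorm h
  obtain ⟨hf, hg⟩ := injective_of_det_submatrix_ne_zero (norm_pos_iff.mp (hfg ▸ h))
  have hα := (Finset.card_image_of_injective Finset.univ hf).trans (Finset.card_fin k)
  have hβ := (Finset.card_image_of_injective Finset.univ hg).trans (Finset.card_fin k)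
  obtain ⟨σ, hσ⟩ := Finset.exists_perm_eq_orderIsoOfFin hf hα
  obtain ⟨τ, hτ⟩ := Finset.exists_perm_eq_orderIsoOfFin hg hβ
  refine ⟨_, _, hα, hβ, ?_⟩
  rw [← hfg, ← norm_det_submatrix_comp_perm _ _ _ σ τ]
  congr 3 <;> exact funext fun i => by simp [hσ, hτ]

theorem posDef_mul_conjTranspose_sub_smul_one {ι : Type*} [Fintype ι] [DecidableEq ι]
    {B : Matrix ι ι 𝕜} (hB : IsUnit B.det) {s c : ℝ} (hs : ∀ i j, ‖B⁻¹ i j‖ ≤ s)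
    (hc : c * (Fintype.card ι * s) ^ 2 < 1) :
    (B * Bᴴ - c • (1 : Matrix ι ι 𝕜)).PosDef := by
  refine posDef_iff_dotProduct_mulVec.mpr
    ⟨(isHermitian_mul_conjTranspose_self B).sub (isHermitian_one.smul (IsSelfAdjoint.all c)),
      fun x hx => ?_⟩
  set z := Bᴴ *ᵥ x
  have hxz : x = Bᴴ⁻¹ *ᵥ z := by
    rw [mulVec_mulVec, nonsing_inv_mul _ (by rwa [det_conjTranspose, isUnit_star]), one_mulVec]
  have hz : z ≠ 0 := fun h => hx (by rw [hxz, h, mulVec_zero])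
  have hentries (i j : ι) : ‖Bᴴ⁻¹ i j‖ ≤ s := by
    rw [← conjTranspose_nonsing_inv, conjTranspose_apply, norm_star]
    exact hs j i
  have hxle : l2NormSq x ≤ (Fintype.card ι * s) ^ 2 * l2NormSq z := by
    rw [hxz]
    linarith [l2NormSq_mulVec_le _ hentries z]
  have hquad :
      star x ⬝ᵥ ((B * Bᴴ - c • 1) *ᵥ x) = ((l2NormSq z - c * l2NormSq x : ℝ) : 𝕜) := by
    have hxB : star x ᵥ* B = star z := by rw [star_mulVec, conjTranspose_conjTranspose]
    rw [sub_mulVec, dotProduct_sub, ← mulVec_mulVec, dotProduct_mulVec, hxB, smul_mulVec,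
      one_mulVec, dotProduct_smul, star_dotProduct_self_eq_l2NormSq,
      star_dotProduct_self_eq_l2NormSq, RCLike.real_smul_eq_coe_mul]
    push_cast
    ring
  rw [hquad, RCLike.ofReal_pos]
  have := l2NormSq_pos hz
  have := l2NormSq_nonneg x
  rcases le_or_gt c 0 with hc0 | hc0 <;> nlinarith

lemma IsHermitian.submatrix_swap {α n m : Type*} [Star α] {M : Matrix n n α}
    (hM : M.IsHermitian) (f g : m → n) : M.submatrix g f = (M.submatrix f g)ᴴ := by
  rw [conjTranspose_submatrix, hM.eq]

namespace IsHermitian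

variable [Fintype n] [DecidableEq n] {A : Matrix n n 𝕜} (hA : A.IsHermitian)

lemma eigenvalues_ne_zero (hdet : IsUnit A.det) (i : n) : hA.eigenvalues i ≠ 0 := by
  intro h
  apply hdet.ne_zero
  rw [hA.det_eq_prod_eigenvalues]
  exact Finset.prod_eq_zero (Finset.mem_univ i) (by simp [h])

lemma mul_eigenvectorUnitary :
    A * (hA.eigenvectorUnitary : Matrix n n 𝕜) =
      (hA.eigenvectorUnitary : Matrix n n 𝕜) * diagonal (RCLike.ofReal ∘ hA.eigenvalues) := by
  conv_lhs => arg 1; rw [hA.spectral_theorem]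
  simp [Unitary.conjStarAlgAut_apply, Matrix.mul_assoc]

lemma inv_mul_eigenvectorUnitary (hdet : IsUnit A.det) :
    A⁻¹ * (hA.eigenvectorUnitary : Matrix n n 𝕜) =
      (hA.eigenvectorUnitary : Matrix n n 𝕜) * diagonal fun i => (hA.eigenvalues i : 𝕜)⁻¹ := by
  have hdiag : diagonal (RCLike.ofReal ∘ hA.eigenvalues) * diagonal
      (fun i => (hA.eigenvalues i : 𝕜)⁻¹) = 1 := by
    rw [diagonal_mul_diagonal, ← diagonal_one]
    congr 1
    funext i
    exact mul_inv_cancel₀ (RCLike.ofReal_ne_zero.mpr (hA.eigenvalues_ne_zero hdet i))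
  calc A⁻¹ * (hA.eigenvectorUnitary : Matrix n n 𝕜)
      = A⁻¹ * (A * hA.eigenvectorUnitary) * diagonal fun i => (hA.eigenvalues i : 𝕜)⁻¹ := by
        rw [hA.mul_eigenvectorUnitary, Matrix.mul_assoc, Matrix.mul_assoc, hdiag, Matrix.mul_one]
    _ = _ := by rw [← Matrix.mul_assoc, nonsing_inv_mul _ hdet, Matrix.one_mul]

lemma l2NormSq_le_inv_mulVec (hdet : IsUnit A.det) {T : Finset n} {r : ℝ}
    (hT : ∀ i ∈ T, |hA.eigenvalues i| ≤ r) {c : n → 𝕜} (hc : ∀ i ∉ T, c i = 0) :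
    l2NormSq ((hA.eigenvectorUnitary : Matrix n n 𝕜) *ᵥ c) ≤
      r ^ 2 * l2NormSq (A⁻¹ *ᵥ ((hA.eigenvectorUnitary : Matrix n n 𝕜) *ᵥ c)) := by
  have hU := mem_unitaryGroup_iff'.mp hA.eigenvectorUnitary.2
  rw [mulVec_mulVec, hA.inv_mul_eigenvectorUnitary hdet, ← mulVec_mulVec,
    l2NormSq_mulVec_of_star_mul_self hU, l2NormSq_mulVec_of_star_mul_self hU, l2NormSq,
    l2NormSq, Finset.mul_sum]
  refine Finset.sum_le_sum fun i _ => ?_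
  by_cases hi : i ∈ T
  · have hμ := hA.eigenvalues_ne_zero hdet i
    have hμr : hA.eigenvalues i ^ 2 ≤ r ^ 2 := by
      simpa only [sq_abs] using pow_le_pow_left₀ (abs_nonneg _) (hT i hi) 2
    rw [mulVec_diagonal, norm_mul, norm_inv, RCLike.norm_ofReal, mul_pow, inv_pow, sq_abs,
      ← mul_assoc]
    have hμ2 : 0 < hA.eigenvalues i ^ 2 := by positivity
    calc ‖c i‖ ^ 2 = 1 * ‖c i‖ ^ 2 := (one_mul _).symm
      _ ≤ r ^ 2 * (hA.eigenvalues i ^ 2)⁻¹ * ‖c i‖ ^ 2 := by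
        gcongr
        rwa [← div_eq_mul_inv, one_le_div hμ2]
  · rw [hc i hi, norm_zero, zero_pow two_ne_zero]
    positivity

lemma hasExpandingVector_inv (hdet : IsUnit A.det) {T : Finset n} {r : ℝ}
    (hT : ∀ i ∈ T, |hA.eigenvalues i| ≤ r) {j : ℕ} (hj : j < T.card) :
    (A⁻¹).HasExpandingVector r j := by
  intro w
  set U : Matrix n n 𝕜 := ↑hA.eigenvectorUnitary
  obtain ⟨c, hc0, hcT, hc⟩ :=
    exists_ne_zero_mulVec_eq_zero_of_card_lt ((A⁻¹ * U).submatrix w id) T (by simpa using hj)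
  refine ⟨U *ᵥ c, fun h => ?_, fun a => ?_, hA.l2NormSq_le_inv_mulVec hdet hT hcT⟩
  · have hnorm := l2NormSq_mulVec_of_star_mul_self
      (mem_unitaryGroup_iff'.mp hA.eigenvectorUnitary.2) c
    rw [h, l2NormSq_zero] at hnorm
    exact (l2NormSq_pos hc0).ne hnorm
  · rw [mulVec_mulVec]
    exact congrFun hc a

end IsHermitian

end Matrix

theorem Matrix.IsHermitian.exists_hasExpandingVector_inv_of_le_eigCountIoo [Fintype n]
    [DecidableEq n] {A : Matrix n n ℂ} (hA : A.IsHermitian) (hdet : IsUnit A.det)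
    {m : ℕ} (hm : 1 ≤ m) {ε : ℝ} (hcount : m ≤ eigCountIoo A (-ε) ε) :
    ∃ r, 0 ≤ r ∧ r < ε ∧ ∀ j < m, (A⁻¹).HasExpandingVector r j := by
  set T := Finset.univ.filter fun i => hA.eigenvalues i ∈ Set.Ioo (-ε) ε
  have hT : m ≤ T.card := by
    rwa [eigCountIoo, dif_pos hA, Nat.card_eq_fintype_card, Fintype.card_subtype] at hcount
  have hTne : T.Nonempty := Finset.card_pos.mp (by omega)
  refine ⟨T.sup' hTne fun i => |hA.eigenvalues i|, ?_, ?_, fun j hj =>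
    hA.hasExpandingVector_inv hdet (fun i hi => Finset.le_sup' (fun i => |hA.eigenvalues i|) hi)
      (by omega)⟩
  · exact (abs_nonneg _).trans (Finset.le_sup' (fun i => |hA.eigenvalues i|) hTne.choose_spec)
  · exact (Finset.sup'_lt_iff _).mpr fun i hi => abs_lt.mpr (Finset.mem_filter.mp hi).2

lemma sq_mul_sq_lt_one_of_lt {k N : ℕ} (hN : 0 < N) {r ε : ℝ} (hr : 0 ≤ r) (hrε : r < ε) :
    (1 / ((k + 1).factorial * 2 ^ k) / N / ε) ^ 2 * ((k + 1) * (r * N)) ^ 2 < 1 := by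
  have hε : 0 < ε := hr.trans_lt hrε
  have hbase : 1 / ((k + 1).factorial * 2 ^ k) / N / ε * ((k + 1) * (r * N)) =
      r / ε / (k.factorial * 2 ^ k) := by
    rw [Nat.factorial_succ]
    push_cast
    field_simp
  have hle : r / ε / (k.factorial * 2 ^ k) ≤ r / ε :=
    div_le_self (by positivity) (one_le_mul_of_one_le_of_one_le
      (by exact_mod_cast k.factorial_pos) (one_le_pow₀ one_le_two))
  rw [← mul_pow, hbase]
  exact pow_lt_one₀ (by positivity) (hle.trans_lt ((div_lt_one hε).mpr hrε)) two_ne_zero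

theorem stmt0_general {N : ℕ} (A : Matrix (Fin N) (Fin N) ℂ) (hA : A.IsHermitian)
    (hInv : IsUnit A) (m : ℕ) (hm : 1 ≤ m) (ε : ℝ)
    (Cm K : ℝ) (hCm : Cm = 1 / (m.factorial * 2 ^ (m - 1))) (hK : K = Cm / N)
    (hcount : m ≤ eigCountIoo A (-ε) ε) :
    ∃ (α β : Finset (Fin N)) (hα : α.card = m) (hβ : β.card = m),
      ((A⁻¹).submatrix (fun i => ((α.orderIsoOfFin hα) i : Fin N))
            (fun j => ((β.orderIsoOfFin hβ) j : Fin N)) *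
          (A⁻¹).submatrix (fun i => ((β.orderIsoOfFin hβ) i : Fin N))
            (fun j => ((α.orderIsoOfFin hα) j : Fin N)) -
        ((K / ε) ^ 2 : ℝ) • (1 : Matrix (Fin m) (Fin m) ℂ)).PosDef := by
  obtain ⟨k, rfl⟩ : ∃ k, m = k + 1 := ⟨m - 1, by omega⟩
  obtain ⟨r, hr, hrε, hexp⟩ := hA.exists_hasExpandingVector_inv_of_le_eigCountIoo
    ((isUnit_iff_isUnit_det A).mp hInv) hm hcount
  have hpos := maxMinorNorm_pos hr hexp
  obtain ⟨α, β, hα, hβ, hdet⟩ := exists_finset_norm_det_eq_maxMinorNorm (hpos _ le_rfl)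
  refine ⟨α, β, hα, hβ, ?_⟩
  rw [hA.inv.submatrix_swap (fun i => (α.orderIsoOfFin hα i : Fin N))
    (fun j => (β.orderIsoOfFin hβ j : Fin N))]
  refine posDef_mul_conjTranspose_sub_smul_one (s := r * N)
    (isUnit_iff_ne_zero.mpr (norm_pos_iff.mp (hdet ▸ hpos _ le_rfl))) (fun i j => ?_) ?_
  · have hstep := maxMinorNorm_le_mul_succ hr (hexp k (by omega)) (hpos k (by omega))
    rw [Fintype.card_fin] at hstep
    refine (norm_inv_submatrix_apply_le _ _ i j).trans ?_
    rw [hdet, div_le_iff₀ (hpos _ le_rfl)]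
    exact hstep
  · rw [Fintype.card_fin, hK, hCm, Nat.add_sub_cancel]
    exact_mod_cast sq_mul_sq_lt_one_of_lt (α.orderIsoOfFin hα 0 : Fin N).pos hr hrε

theorem stmt0 {N : ℕ} (A : Matrix (Fin N) (Fin N) ℂ) (hA : A.IsHermitian)
    (hInv : IsUnit A) (m : ℕ) (hm : 1 ≤ m) (ε : ℝ) (hε : 0 < ε)
    (Cm K : ℝ) (hCm : Cm = 1 / (m.factorial * 2 ^ (m - 1))) (hK : K = Cm / N)
    (hcount : m ≤ eigCountIoo A (-ε) ε) :
    ∃ (α β : Finset (Fin N)) (hα : α.card = m) (hβ : β.card = m),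
      ((A⁻¹).submatrix (fun i => ((α.orderIsoOfFin hα) i : Fin N))
            (fun j => ((β.orderIsoOfFin hβ) j : Fin N)) *
          (A⁻¹).submatrix (fun i => ((β.orderIsoOfFin hβ) i : Fin N))
            (fun j => ((α.orderIsoOfFin hα) j : Fin N)) -
        ((K / ε) ^ 2 : ℝ) • (1 : Matrix (Fin m) (Fin m) ℂ)).PosDef :=
  stmt0_general A hA hInv m hm ε Cm K hCm hK hcount
end

section
/- Let A be an invertible Hermitian N×N complex matrix, let m ≥ 1 be an integer and ε > 0. If there exist index subsets α, β ⊆ {1,…,N}, each of cardinality m, such that the m×m matrix A⁻¹[α,β]·A⁻¹[β,α] − (1/ε²)·I_m is positive definite, then A has at least m eigenvalues, counted with multiplicity, in the open interval (−ε, ε). -/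
/-! Write `B = A⁻¹`. The hypothesis says `‖B[β,α] x‖ > ‖x‖ / ε` for `x ≠ 0`; extending `x` by zero
along `α` to `v`, the vector `w = B v` satisfies `‖A w‖ = ‖x‖` and `‖w‖ ≥ ‖B[β,α] x‖`, so
`‖A w‖ < ε ‖w‖` on an `m`-dimensional space of vectors `w`. On the other hand, every vector whose
coordinates in an eigenbasis vanish at the eigenvalues in `(-ε, ε)` has `‖A w‖ ≥ ε ‖w‖`, and these
vectors form a subspace of codimension at most the number of such eigenvalues. The two subspaces
meet only in `0`, which bounds `m` by that number. -/

open Matrix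
open scoped ComplexOrder

open Function Module

namespace OrthonormalBasis

variable {𝕜 E ι : Type*} [RCLike 𝕜] [NormedAddCommGroup E] [InnerProductSpace 𝕜 E] [Fintype ι]
  (b : OrthonormalBasis ι 𝕜 E) {T : E →ₗ[𝕜] E} {μ : ι → 𝕜}

theorem repr_apply_of_apply_eq_smul (hT : ∀ i, T (b i) = μ i • b i) (w : E) (i : ι) :
    b.repr (T w) i = μ i * b.repr w i := by
  classical
  conv_lhs => rw [← b.sum_repr w]
  simp [map_sum, hT, Pi.single_apply, mul_comm]

theorem norm_sq_apply_of_apply_eq_smul (hT : ∀ i, T (b i) = μ i • b i) (w : E) :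
    ‖T w‖ ^ 2 = ∑ i, ‖μ i‖ ^ 2 * ‖b.repr w i‖ ^ 2 := by
  simp only [← b.repr.norm_map, EuclideanSpace.norm_sq_eq, b.repr_apply_of_apply_eq_smul hT,
    norm_mul, mul_pow]

theorem mul_norm_le_norm_apply_of_repr_eq_zero (hT : ∀ i, T (b i) = μ i • b i) {ε : ℝ}
    (hε : 0 ≤ ε) {w : E} (hw : ∀ i, ‖μ i‖ < ε → b.repr w i = 0) : ε * ‖w‖ ≤ ‖T w‖ := by
  refine abs_le_of_sq_le_sq' ?_ (norm_nonneg _) |>.2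
  rw [b.norm_sq_apply_of_apply_eq_smul hT, mul_pow, ← b.repr.norm_map, EuclideanSpace.norm_sq_eq,
    Finset.mul_sum]
  refine Finset.sum_le_sum fun i _ => ?_
  by_cases hi : ‖μ i‖ < ε
  · simp [hw i hi]
  · gcongr
    exact not_lt.1 hi

theorem finrank_le_card_norm_lt (hT : ∀ i, T (b i) = μ i • b i) {ε : ℝ}
    {W : Submodule 𝕜 E} (hW : ∀ w ∈ W, w ≠ 0 → ‖T w‖ < ε * ‖w‖) :
    finrank 𝕜 W ≤ Nat.card {i // ‖μ i‖ < ε} := by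
  classical
  have := Module.Finite.of_basis b.toBasis
  let P : E →ₗ[𝕜] {i // ‖μ i‖ < ε} → 𝕜 := LinearMap.pi fun i => b.toBasis.coord i
  have hker : Fintype.card ι ≤ Nat.card {i // ‖μ i‖ < ε} + finrank 𝕜 (LinearMap.ker P) := by
    rw [← finrank_eq_card_basis b.toBasis, ← P.finrank_range_add_finrank_ker,
      Nat.card_eq_fintype_card, ← Module.finrank_fintype_fun_eq_card 𝕜]
    gcongr
    exact (LinearMap.range P).finrank_le
  have hdisj : Disjoint W (LinearMap.ker P) := by
    refine Submodule.disjoint_def.2 fun w hwW hwP => by_contra fun hw => ?_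
    have hlt := hW w hwW hw
    have hε : 0 < ε := pos_of_mul_pos_left ((norm_nonneg _).trans_lt hlt) (norm_nonneg w)
    have hrepr : ∀ i, ‖μ i‖ < ε → b.repr w i = 0 := fun i hi => by
      simpa [P] using congrFun (LinearMap.mem_ker.1 hwP) ⟨i, hi⟩
    exact (b.mul_norm_le_norm_apply_of_repr_eq_zero hT hε.le hrepr).not_gt hlt
  have := Submodule.finrank_add_finrank_le_of_disjoint hdisj
  rw [finrank_eq_card_basis b.toBasis] at this
  omega

end OrthonormalBasis

namespace Matrix

variable {𝕜 : Type*} [RCLike 𝕜] {l m n : Type*} [Fintype l] [Fintype m] [Fintype n]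
  [DecidableEq m] [DecidableEq n]

theorem IsHermitian.toEuclideanLin_eigenvectorBasis {A : Matrix n n 𝕜} (hA : A.IsHermitian)
    (i : n) : toEuclideanLin A (hA.eigenvectorBasis i) =
      (hA.eigenvalues i : 𝕜) • hA.eigenvectorBasis i := by
  apply WithLp.ofLp_injective
  rw [toLpLin_apply, WithLp.ofLp_toLp, hA.mulVec_eigenvectorBasis, WithLp.ofLp_smul,
    RCLike.real_smul_eq_coe_smul (K := 𝕜)]

theorem norm_toEuclideanLin_of_conjTranspose_mul_self {P : Matrix n m 𝕜} (hP : Pᴴ * P = 1)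
    (x : EuclideanSpace 𝕜 m) : ‖toEuclideanLin P x‖ = ‖x‖ := by
  have h : inner 𝕜 (toEuclideanLin P x) (toEuclideanLin P x) = inner 𝕜 x x := by
    rw [← LinearMap.adjoint_inner_right, ← toEuclideanLin_conjTranspose_eq_adjoint,
      ← LinearMap.comp_apply, ← toLpLin_mul_same, hP, toLpLin_one, LinearMap.id_apply]
  rw [← sq_eq_sq₀ (norm_nonneg _) (norm_nonneg _), ← inner_self_eq_norm_sq (𝕜 := 𝕜), h,
    inner_self_eq_norm_sq]

theorem norm_toEuclideanLin_submatrix_le (M : Matrix n m 𝕜) {f : l → n} (hf : Injective f)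
    (x : EuclideanSpace 𝕜 m) : ‖toEuclideanLin (M.submatrix f id) x‖ ≤ ‖toEuclideanLin M x‖ := by
  have hv : M.submatrix f id *ᵥ x.ofLp = (M *ᵥ x.ofLp) ∘ f :=
    submatrix_mulVec_equiv M x.ofLp f (Equiv.refl m)
  simp only [EuclideanSpace.norm_eq, toLpLin_apply, hv]
  gcongr
  calc _ = ∑ j ∈ Finset.univ.image f, ‖(M *ᵥ x.ofLp) j‖ ^ 2 :=
        (Finset.sum_image fun _ _ _ _ h => hf h).symm
    _ ≤ _ := Finset.sum_le_sum_of_subset_of_nonneg (Finset.subset_univ _) fun _ _ _ => by positivity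

theorem PosDef.mul_norm_sq_lt [DecidableEq l] {C : Matrix l m 𝕜} {c : ℝ}
    (h : (Cᴴ * C - c • (1 : Matrix m m 𝕜)).PosDef) {x : EuclideanSpace 𝕜 m} (hx : x ≠ 0) :
    c * ‖x‖ ^ 2 < ‖toEuclideanLin C x‖ ^ 2 := by
  have hpos := h.dotProduct_mulVec_pos (x := x.ofLp) (by simpa using hx)
  have hform : star x.ofLp ⬝ᵥ ((Cᴴ * C - c • (1 : Matrix m m 𝕜)) *ᵥ x.ofLp) =
      ((‖toEuclideanLin C x‖ ^ 2 - c * ‖x‖ ^ 2 : ℝ) : 𝕜) := by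
    rw [dotProduct_comm]
    change inner 𝕜 x (toEuclideanLin (Cᴴ * C - c • 1) x) = _
    rw [RCLike.real_smul_eq_coe_smul (K := 𝕜), map_sub, map_smul, toLpLin_one,
      LinearMap.sub_apply, inner_sub_right, toLpLin_mul_same, LinearMap.comp_apply,
      toEuclideanLin_conjTranspose_eq_adjoint, LinearMap.adjoint_inner_right,
      LinearMap.smul_apply, LinearMap.id_apply, inner_smul_right, inner_self_eq_norm_sq_to_K,
      inner_self_eq_norm_sq_to_K]
    push_cast
    ring
  rw [hform, RCLike.ofReal_pos] at hpos
  linarith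

theorem norm_toEuclideanLin_lt_of_posDef {A : Matrix n n 𝕜} (hA : IsUnit A) {e : m → n}
    (he : Injective e) {f : l → n} (hf : Injective f) {ε : ℝ} (hε : 0 < ε)
    (h : ((A⁻¹.submatrix f e)ᴴ * A⁻¹.submatrix f e - (1 / ε ^ 2 : ℝ) • (1 : Matrix m m 𝕜)).PosDef)
    {x : EuclideanSpace 𝕜 m} (hx : x ≠ 0) :
    ‖toEuclideanLin A (toEuclideanLin (A⁻¹.submatrix id e) x)‖ <
      ε * ‖toEuclideanLin (A⁻¹.submatrix id e) x‖ := by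
  classical
  set w := toEuclideanLin (A⁻¹.submatrix id e) x
  have hAw : toEuclideanLin A w = toEuclideanLin ((1 : Matrix n n 𝕜).submatrix id e) x := by
    have hdet := (isUnit_iff_isUnit_det A).1 hA
    rw [← LinearMap.comp_apply, ← toLpLin_mul_same, ← mul_nonsing_inv A hdet,
      submatrix_mul A A⁻¹ id id e bijective_id, submatrix_id_id]
  have hP : ((1 : Matrix n n 𝕜).submatrix id e)ᴴ * (1 : Matrix n n 𝕜).submatrix id e = 1 := by
    rw [conjTranspose_submatrix, conjTranspose_one, ← submatrix_mul _ _ _ _ _ bijective_id,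
      one_mul, submatrix_one _ he]
  have hnorm : ‖toEuclideanLin A w‖ = ‖x‖ := by
    rw [hAw, norm_toEuclideanLin_of_conjTranspose_mul_self hP]
  have hrestr : ‖toEuclideanLin (A⁻¹.submatrix f e) x‖ ≤ ‖w‖ :=
    norm_toEuclideanLin_submatrix_le (A⁻¹.submatrix id e) hf x
  have hlt : ‖x‖ ^ 2 < (ε * ‖w‖) ^ 2 :=
    calc ‖x‖ ^ 2 = ε ^ 2 * (1 / ε ^ 2 * ‖x‖ ^ 2) := by field_simp
      _ < ε ^ 2 * ‖toEuclideanLin (A⁻¹.submatrix f e) x‖ ^ 2 := by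
        gcongr
        exact h.mul_norm_sq_lt hx
      _ ≤ (ε * ‖w‖) ^ 2 := by rw [mul_pow]; gcongr
  rw [hnorm]
  exact lt_of_pow_lt_pow_left₀ 2 (by positivity) hlt

end Matrix

theorem stmt1_general {N : ℕ} (A : Matrix (Fin N) (Fin N) ℂ) (hA : A.IsHermitian)
    (hInv : IsUnit A) (m : ℕ) (ε : ℝ) (hε : 0 < ε)
    (h : ∃ (α β : Finset (Fin N)) (hα : α.card = m) (hβ : β.card = m),
      ((A⁻¹).submatrix (fun i => ((α.orderIsoOfFin hα) i : Fin N))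
            (fun j => ((β.orderIsoOfFin hβ) j : Fin N)) *
          (A⁻¹).submatrix (fun i => ((β.orderIsoOfFin hβ) i : Fin N))
            (fun j => ((α.orderIsoOfFin hα) j : Fin N)) -
        ((1 / ε ^ 2) : ℝ) • (1 : Matrix (Fin m) (Fin m) ℂ)).PosDef) :
    m ≤ eigCountIoo A (-ε) ε := by
  obtain ⟨α, β, hα, hβ, hPD⟩ := h
  set e : Fin m → Fin N := fun i => ((α.orderIsoOfFin hα) i : Fin N)
  set f : Fin m → Fin N := fun i => ((β.orderIsoOfFin hβ) i : Fin N)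
  have he : Injective e := Subtype.val_injective.comp (α.orderIsoOfFin hα).injective
  have hf : Injective f := Subtype.val_injective.comp (β.orderIsoOfFin hβ).injective
  rw [show A⁻¹.submatrix e f = (A⁻¹.submatrix f e)ᴴ by
    rw [conjTranspose_submatrix, hA.inv.eq]] at hPD
  have hW := fun x => norm_toEuclideanLin_lt_of_posDef hInv he hf hε hPD (x := x)
  set L := toEuclideanLin (A⁻¹.submatrix id e)
  have hL : Injective L := by
    refine (injective_iff_map_eq_zero L).2 fun x hx => by_contra fun hx0 => ?_
    simpa [hx] using hW x hx0
  calc m = finrank ℂ (LinearMap.range L) := by simp [LinearMap.finrank_range_of_inj hL]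
    _ ≤ Nat.card {i // ‖(hA.eigenvalues i : ℂ)‖ < ε} := by
      refine hA.eigenvectorBasis.finrank_le_card_norm_lt hA.toEuclideanLin_eigenvectorBasis ?_
      rintro _ ⟨x, rfl⟩ hx
      exact hW x (by rintro rfl; simp at hx)
    _ = eigCountIoo A (-ε) ε := by
      rw [eigCountIoo, dif_pos hA]
      exact Nat.card_congr (Equiv.subtypeEquivRight fun i => by simp [abs_lt])

theorem stmt1 {N : ℕ} (A : Matrix (Fin N) (Fin N) ℂ) (hA : A.IsHermitian)
    (hInv : IsUnit A) (m : ℕ) (hm : 1 ≤ m) (ε : ℝ) (hε : 0 < ε)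
    (h : ∃ (α β : Finset (Fin N)) (hα : α.card = m) (hβ : β.card = m),
      ((A⁻¹).submatrix (fun i => ((α.orderIsoOfFin hα) i : Fin N))
            (fun j => ((β.orderIsoOfFin hβ) j : Fin N)) *
          (A⁻¹).submatrix (fun i => ((β.orderIsoOfFin hβ) i : Fin N))
            (fun j => ((α.orderIsoOfFin hα) j : Fin N)) -
        ((1 / ε ^ 2) : ℝ) • (1 : Matrix (Fin m) (Fin m) ℂ)).PosDef) :
    m ≤ eigCountIoo A (-ε) ε :=
  stmt1_general A hA hInv m ε hε h
end

section
/- Let A be an invertible Hermitian N×N complex matrix, let m ≥ 1 be an integer and ε > 0. If there exists an index subset γ ⊆ {1,…,N} of cardinality 2m such that the principal submatrix A⁻¹[γ] is invertible and the Hermitian matrix (A⁻¹[γ])⁻¹ has at least m eigenvalues, counted with multiplicity, in the open interval (−ε, ε), then A has at least m eigenvalues, counted with multiplicity, in the open interval (−ε, ε). -/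
/-! Put `B = A⁻¹[γ] = Sᴴ A⁻¹ S`, where `S` is the isometric inclusion `ℂ^γ → ℂ^N`. For Hermitian
`M`, the number of eigenvalues in `(-ε, ε)` bounds the dimension of every subspace on which
`‖M x‖ < ε ‖x‖`, and is attained by the span of the corresponding eigenvectors. Take that span `W`
for `B⁻¹` and push it forward by the injective map `L = A⁻¹ S B⁻¹`: for `x = L y` one has
`A x = S B⁻¹ y` and `Sᴴ x = y`, hence `‖A x‖ = ‖B⁻¹ y‖ < ε ‖y‖ ≤ ε ‖x‖`. -/

open Matrix

/-- The principal submatrix of `M` with rows and columns indexed by `γ`. -/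
def principalSub {N : ℕ} (M : Matrix (Fin N) (Fin N) ℂ) (γ : Finset (Fin N)) :
    Matrix γ γ ℂ :=
  M.submatrix (fun i => (i : Fin N)) (fun i => (i : Fin N))

open Module
open scoped InnerProductSpace

lemma Matrix.conjTranspose_submatrix_one_mul_mul {α m n : Type*} [Semiring α] [StarRing α]
    [Fintype n] [DecidableEq n] (M : Matrix n n α) (e : m → n) :
    ((1 : Matrix n n α).submatrix id e)ᴴ * M * (1 : Matrix n n α).submatrix id e =
      M.submatrix e e := by
  ext i j
  simp [mul_apply, one_apply]

lemma Matrix.conjTranspose_submatrix_one_mul_self {α m n : Type*} [Semiring α] [StarRing α]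
    [Fintype n] [DecidableEq n] [DecidableEq m] {e : m → n} (he : Function.Injective e) :
    ((1 : Matrix n n α).submatrix id e)ᴴ * (1 : Matrix n n α).submatrix id e = 1 := by
  rw [← Matrix.mul_one (_ᴴ), conjTranspose_submatrix_one_mul_mul, submatrix_one _ he]

namespace Matrix.IsHermitian

variable {𝕜 n : Type*} [RCLike 𝕜] [Fintype n] [DecidableEq n] {A : Matrix n n 𝕜}

lemma toEuclideanLin_eigenvectorBasis_s3 (hA : A.IsHermitian) (i : n) :
    toEuclideanLin A (hA.eigenvectorBasis i) = (hA.eigenvalues i : 𝕜) • hA.eigenvectorBasis i := by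
  rw [toLpLin_apply, hA.mulVec_eigenvectorBasis, RCLike.real_smul_eq_coe_smul (K := 𝕜)]
  rfl

lemma eigenvectorBasis_repr_toEuclideanLin (hA : A.IsHermitian) (x : EuclideanSpace 𝕜 n)
    (i : n) :
    hA.eigenvectorBasis.repr (toEuclideanLin A x) i =
      hA.eigenvalues i * hA.eigenvectorBasis.repr x i := by
  rw [OrthonormalBasis.repr_apply_apply, OrthonormalBasis.repr_apply_apply,
    ← isSymmetric_toEuclideanLin_iff.mpr hA, toEuclideanLin_eigenvectorBasis_s3 hA, inner_smul_left,
    RCLike.conj_ofReal]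

lemma norm_toEuclideanLin_sq (hA : A.IsHermitian) (x : EuclideanSpace 𝕜 n) :
    ‖toEuclideanLin A x‖ ^ 2 =
      ∑ i, hA.eigenvalues i ^ 2 * ‖hA.eigenvectorBasis.repr x i‖ ^ 2 := by
  rw [← hA.eigenvectorBasis.repr.norm_map, EuclideanSpace.norm_sq_eq]
  simp [eigenvectorBasis_repr_toEuclideanLin hA, mul_pow]

lemma finrank_le_card_eigenvalues_mem_Ioo (hA : A.IsHermitian) {ε : ℝ}
    (V : Submodule 𝕜 (EuclideanSpace 𝕜 n))
    (hV : ∀ x ∈ V, x ≠ 0 → ‖toEuclideanLin A x‖ < ε * ‖x‖) :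
    finrank 𝕜 V ≤ Nat.card {i // hA.eigenvalues i ∈ Set.Ioo (-ε) ε} := by
  set v := hA.eigenvectorBasis with hv
  by_contra! hlt
  let f : V →ₗ[𝕜] {i // hA.eigenvalues i ∈ Set.Ioo (-ε) ε} → 𝕜 := LinearMap.pi fun i =>
    (EuclideanSpace.proj (𝕜 := 𝕜) (i : n)).toLinearMap ∘ₗ v.repr.toLinearMap ∘ₗ V.subtype
  obtain ⟨⟨x, hxV⟩, hker, hx⟩ := Submodule.exists_mem_ne_zero_of_ne_bot
    (LinearMap.ker_ne_bot_of_finrank_lt (f := f)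
      (by rwa [finrank_fintype_fun_eq_card, ← Nat.card_eq_fintype_card]))
  have hx0 : x ≠ 0 := fun h => hx (by simp [h])
  have hc : ∀ i, hA.eigenvalues i ∈ Set.Ioo (-ε) ε → v.repr x i = 0 := fun i hi =>
    congr_fun hker ⟨i, hi⟩
  have hAx := hV x hxV hx0
  have hε : 0 ≤ ε := by
    by_contra! h
    nlinarith [norm_nonneg (toEuclideanLin A x), norm_nonneg x]
  have : ε ^ 2 * ‖x‖ ^ 2 ≤ ‖toEuclideanLin A x‖ ^ 2 := by
    rw [hA.norm_toEuclideanLin_sq, ← hv, ← v.repr.norm_map, EuclideanSpace.norm_sq_eq,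
      Finset.mul_sum]
    refine Finset.sum_le_sum fun i _ => ?_
    by_cases hi : hA.eigenvalues i ∈ Set.Ioo (-ε) ε
    · simp [hc i hi]
    · have : ε ≤ |hA.eigenvalues i| := by
        rwa [Set.mem_Ioo, ← abs_lt, not_lt] at hi
      refine mul_le_mul_of_nonneg_right ?_ (by positivity)
      simpa [sq_abs] using pow_le_pow_left₀ hε this 2
  nlinarith [norm_nonneg (toEuclideanLin A x)]

lemma exists_finrank_eq_card_eigenvalues_mem_Ioo (hA : A.IsHermitian) (ε : ℝ) :
    ∃ W : Submodule 𝕜 (EuclideanSpace 𝕜 n),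
      finrank 𝕜 W = Nat.card {i // hA.eigenvalues i ∈ Set.Ioo (-ε) ε} ∧
      ∀ y ∈ W, y ≠ 0 → ‖toEuclideanLin A y‖ < ε * ‖y‖ := by
  set v := hA.eigenvectorBasis with hv
  set I := {i // hA.eigenvalues i ∈ Set.Ioo (-ε) ε}
  refine ⟨Submodule.span 𝕜 (Set.range fun i : I => v i), ?_, fun y hy hy0 => ?_⟩
  · exact (finrank_span_eq_card <|
      v.orthonormal.linearIndependent.comp _ Subtype.val_injective).trans
        Nat.card_eq_fintype_card.symm
  have hc : ∀ i, hA.eigenvalues i ∉ Set.Ioo (-ε) ε → v.repr y i = 0 := by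
    intro i hi
    have : Submodule.span 𝕜 (Set.range fun i : I => v i) ≤ LinearMap.ker (innerₛₗ 𝕜 (v i)) :=
      Submodule.span_le.mpr <| by
        rintro _ ⟨j, rfl⟩
        exact v.orthonormal.2 fun h => hi (h ▸ j.2)
    rw [v.repr_apply_apply]
    exact this hy
  obtain ⟨i₀, hi₀⟩ : ∃ i, v.repr y i ≠ 0 := by
    by_contra! h
    exact hy0 (v.repr.map_eq_zero_iff.mp (by ext i; exact h i))
  have hε : 0 < ε := by
    obtain ⟨h₁, h₂⟩ := not_not.mp (mt (hc i₀) hi₀)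
    linarith
  have : ‖toEuclideanLin A y‖ ^ 2 < (ε * ‖y‖) ^ 2 := by
    rw [hA.norm_toEuclideanLin_sq, ← hv, mul_pow, ← v.repr.norm_map, EuclideanSpace.norm_sq_eq,
      Finset.mul_sum]
    refine Finset.sum_lt_sum (fun i _ => ?_) ⟨i₀, Finset.mem_univ _, ?_⟩
    · by_cases hi : hA.eigenvalues i ∈ Set.Ioo (-ε) ε
      · exact mul_le_mul_of_nonneg_right (sq_lt_sq' hi.1 hi.2).le (by positivity)
      · simp [hc i hi]
    · obtain ⟨h₁, h₂⟩ := not_not.mp (mt (hc i₀) hi₀)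
      exact mul_lt_mul_of_pos_right (sq_lt_sq' h₁ h₂) (by positivity)
  exact lt_of_pow_lt_pow_left₀ 2 (by positivity) this

end Matrix.IsHermitian

namespace Matrix

variable {𝕜 m n : Type*} [RCLike 𝕜] [Fintype m] [DecidableEq m] [Fintype n] [DecidableEq n]
  {S : Matrix n m 𝕜}

lemma inner_toEuclideanLin_conjTranspose_left (x : EuclideanSpace 𝕜 n)
    (y : EuclideanSpace 𝕜 m) :
    ⟪toEuclideanLin Sᴴ x, y⟫_𝕜 = ⟪x, toEuclideanLin S y⟫_𝕜 := by
  rw [toEuclideanLin_conjTranspose_eq_adjoint, LinearMap.adjoint_inner_left]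

lemma toEuclideanLin_apply_toEuclideanLin_of_mul_eq_one {P : Matrix m n 𝕜} {Q : Matrix n m 𝕜}
    (h : P * Q = 1) (y : EuclideanSpace 𝕜 m) : toEuclideanLin P (toEuclideanLin Q y) = y := by
  rw [← LinearMap.comp_apply, ← toLpLin_mul_same, h, toLpLin_one, LinearMap.id_apply]

lemma norm_toEuclideanLin_of_conjTranspose_mul_self_s3 (hS : Sᴴ * S = 1) (y : EuclideanSpace 𝕜 m) :
    ‖toEuclideanLin S y‖ = ‖y‖ := by
  rw [← sq_eq_sq₀ (norm_nonneg _) (norm_nonneg _), @norm_sq_eq_re_inner 𝕜,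
    @norm_sq_eq_re_inner 𝕜, ← inner_toEuclideanLin_conjTranspose_left,
    toEuclideanLin_apply_toEuclideanLin_of_mul_eq_one hS]

lemma norm_toEuclideanLin_conjTranspose_le (hS : Sᴴ * S = 1) (x : EuclideanSpace 𝕜 n) :
    ‖toEuclideanLin Sᴴ x‖ ≤ ‖x‖ := by
  have h : ‖toEuclideanLin Sᴴ x‖ ^ 2 ≤ ‖toEuclideanLin Sᴴ x‖ * ‖x‖ := calc
    ‖toEuclideanLin Sᴴ x‖ ^ 2 = RCLike.re ⟪toEuclideanLin S (toEuclideanLin Sᴴ x), x⟫_𝕜 := by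
      rw [@norm_sq_eq_re_inner 𝕜, inner_toEuclideanLin_conjTranspose_left, ← inner_conj_symm,
        RCLike.conj_re]
    _ ≤ ‖toEuclideanLin S (toEuclideanLin Sᴴ x)‖ * ‖x‖ := re_inner_le_norm _ _
    _ = ‖toEuclideanLin Sᴴ x‖ * ‖x‖ := by rw [norm_toEuclideanLin_of_conjTranspose_mul_self_s3 hS]
  nlinarith [norm_nonneg (toEuclideanLin Sᴴ x), norm_nonneg x]

end Matrix

lemma eigCountIoo_eq {n : Type*} [Fintype n] [DecidableEq n] {M : Matrix n n ℂ}
    (hM : M.IsHermitian) (a b : ℝ) :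
    eigCountIoo M a b = Nat.card {i // hM.eigenvalues i ∈ Set.Ioo a b} :=
  dif_pos hM

theorem eigCountIoo_inv_conjTranspose_mul_inv_mul_le {m n : Type*} [Fintype m] [DecidableEq m]
    [Fintype n] [DecidableEq n] {A : Matrix n n ℂ} (hA : A.IsHermitian) (hA₁ : IsUnit A)
    {S : Matrix n m ℂ} (hS : Sᴴ * S = 1) (hB : IsUnit (Sᴴ * A⁻¹ * S)) (ε : ℝ) :
    eigCountIoo (Sᴴ * A⁻¹ * S)⁻¹ (-ε) ε ≤ eigCountIoo A (-ε) ε := by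
  set B := Sᴴ * A⁻¹ * S with hB_def
  have hC : B⁻¹.IsHermitian := (isHermitian_conjTranspose_mul_mul S hA.inv).inv
  rw [eigCountIoo_eq hC, eigCountIoo_eq hA]
  obtain ⟨W, hW_dim, hW⟩ := hC.exists_finrank_eq_card_eigenvalues_mem_Ioo ε
  set L := A⁻¹ * S * B⁻¹
  have hAL : A * L = S * B⁻¹ := by
    simp only [L, ← Matrix.mul_assoc, mul_nonsing_inv _ ((isUnit_iff_isUnit_det A).mp hA₁),
      Matrix.one_mul]
  have hSL : Sᴴ * L = 1 := by
    simp only [L, ← Matrix.mul_assoc, ← hB_def,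
      mul_nonsing_inv _ ((isUnit_iff_isUnit_det B).mp hB)]
  have hL_left : Function.LeftInverse (toEuclideanLin Sᴴ) (toEuclideanLin L) :=
    toEuclideanLin_apply_toEuclideanLin_of_mul_eq_one hSL
  rw [← hW_dim, (Submodule.equivMapOfInjective _ hL_left.injective W).finrank_eq]
  refine hA.finrank_le_card_eigenvalues_mem_Ioo _ ?_
  rintro _ ⟨y, hy, rfl⟩ hx
  have hy0 : y ≠ 0 := by rintro rfl; exact hx (map_zero _)
  have hε : 0 ≤ ε := by
    by_contra! h
    nlinarith [hW y hy hy0, norm_nonneg (toEuclideanLin B⁻¹ y), norm_nonneg y]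
  calc ‖toEuclideanLin A (toEuclideanLin L y)‖
      = ‖toEuclideanLin S (toEuclideanLin B⁻¹ y)‖ := by
        rw [← LinearMap.comp_apply, ← toLpLin_mul_same, hAL, toLpLin_mul_same,
          LinearMap.comp_apply]
    _ = ‖toEuclideanLin B⁻¹ y‖ := norm_toEuclideanLin_of_conjTranspose_mul_self_s3 hS _
    _ < ε * ‖y‖ := hW y hy hy0
    _ = ε * ‖toEuclideanLin Sᴴ (toEuclideanLin L y)‖ := by rw [hL_left y]
    _ ≤ ε * ‖toEuclideanLin L y‖ :=
        mul_le_mul_of_nonneg_left (norm_toEuclideanLin_conjTranspose_le hS _) hε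

lemma principalSub_eq_conjTranspose_mul_mul {N : ℕ} (M : Matrix (Fin N) (Fin N) ℂ)
    (γ : Finset (Fin N)) :
    principalSub M γ = ((1 : Matrix (Fin N) (Fin N) ℂ).submatrix id Subtype.val)ᴴ * M *
      (1 : Matrix (Fin N) (Fin N) ℂ).submatrix id (Subtype.val : γ → Fin N) :=
  (conjTranspose_submatrix_one_mul_mul M _).symm

theorem stmt3_general {N : ℕ} (A : Matrix (Fin N) (Fin N) ℂ) (hA : A.IsHermitian)
    (hInv : IsUnit A) (m : ℕ) (ε : ℝ)
    (h : ∃ γ : Finset (Fin N), γ.card = 2 * m ∧ IsUnit (principalSub A⁻¹ γ) ∧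
      m ≤ eigCountIoo ((principalSub A⁻¹ γ)⁻¹) (-ε) ε) :
    m ≤ eigCountIoo A (-ε) ε := by
  obtain ⟨γ, -, hB, hcount⟩ := h
  rw [principalSub_eq_conjTranspose_mul_mul] at hB hcount
  exact hcount.trans <| eigCountIoo_inv_conjTranspose_mul_inv_mul_le hA hInv
    (conjTranspose_submatrix_one_mul_self Subtype.val_injective) hB ε

theorem stmt3 {N : ℕ} (A : Matrix (Fin N) (Fin N) ℂ) (hA : A.IsHermitian)
    (hInv : IsUnit A) (m : ℕ) (hm : 1 ≤ m) (ε : ℝ) (hε : 0 < ε)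
    (h : ∃ γ : Finset (Fin N), γ.card = 2 * m ∧ IsUnit (principalSub A⁻¹ γ) ∧
      m ≤ eigCountIoo ((principalSub A⁻¹ γ)⁻¹) (-ε) ε) :
    m ≤ eigCountIoo A (-ε) ε :=
  stmt3_general A hA hInv m ε h
end

section
/- Let l ≥ 2 and let A be an l×l positive definite Hermitian complex matrix, written in block form A = [[A₁₁, u],[u*, B]] where A₁₁ is the (1,1) scalar entry, u is a 1×(l−1) row vector, and B is the (l−1)×(l−1) lower-right block. Suppose that A₁₁ ≥ A_{ii} for every diagonal entry A_{ii} of A, and that the Schur complement B − (1/A₁₁)·u*u satisfies B − (1/A₁₁)·u*u − a·I_{l−1} positive semidefinite for some a > 0. Then A − (a/(2l))·I_l is positive semidefinite. -/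
/-!
Write `x = (x₀, y)`, `u = (A₀ⱼ)ⱼ₌₁..` and `c = x₀ + (u ⬝ᵥ y) / A₀₀`. Completing the square gives
`x* A x = A₀₀ |c|² + y* S y ≥ A₀₀ |c|² + a ‖y‖²` for the Schur complement `S`. The 2 × 2 principal
minors bound `|u_j|² ≤ A₀₀ A_jj ≤ A₀₀²`, so by Cauchy–Schwarz `|x₀|² ≤ 2 |c|² + 2 (l - 1) ‖y‖²`;
together with `a ≤ A₀₀`, read off the first diagonal entry of `S - a`, this yields
`x* A x ≥ a / (2 l) · ‖x‖²`.
-/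

open Matrix RCLike
open scoped ComplexOrder

section
variable {𝕜 ι : Type*} [RCLike 𝕜]

lemma Matrix.PosSemidef.norm_apply_sq_le {M : Matrix ι ι 𝕜} (hM : M.PosSemidef) (i j : ι) :
    ‖M i j‖ ^ 2 ≤ re (M i i) * re (M j j) := by
  have hdet := (hM.submatrix ![i, j]).det_nonneg
  rw [det_fin_two] at hdet
  simp only [submatrix_apply, Matrix.cons_val_zero, Matrix.cons_val_one] at hdet
  rw [← hM.1.apply i j, RCLike.star_def, RCLike.conj_mul, ← hM.1.coe_re_apply_self i,
    ← hM.1.coe_re_apply_self j, ← ofReal_mul, ← ofReal_pow, ← ofReal_sub, ofReal_nonneg] at hdet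
  rw [← hM.1.apply i j, norm_star]
  linarith

variable [Fintype ι]

lemma star_dotProduct_self_eq (v : ι → 𝕜) : star v ⬝ᵥ v = ((∑ i, ‖v i‖ ^ 2 : ℝ) : 𝕜) := by
  simp [dotProduct, RCLike.conj_mul]

lemma norm_dotProduct_sq_le (u v : ι → 𝕜) :
    ‖u ⬝ᵥ v‖ ^ 2 ≤ (∑ i, ‖u i‖ ^ 2) * ∑ i, ‖v i‖ ^ 2 :=
  calc ‖u ⬝ᵥ v‖ ^ 2 ≤ (∑ i, ‖u i‖ * ‖v i‖) ^ 2 := by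
        gcongr
        simpa only [dotProduct, norm_mul] using norm_sum_le _ fun i => u i * v i
    _ ≤ _ := Finset.sum_mul_sq_le_sq_mul_sq _ _ _

end

namespace Matrix
variable {R : Type*} {n : ℕ}

lemma star_dotProduct_mulVec_fin_succ [CommSemiring R] [StarRing R]
    (A : Matrix (Fin (n + 1)) (Fin (n + 1)) R) (x : Fin (n + 1) → R) :
    star x ⬝ᵥ A *ᵥ x = star (x 0) * A 0 0 * x 0 + star (x 0) * (Fin.tail (A 0) ⬝ᵥ Fin.tail x)
      + (star (Fin.tail x) ⬝ᵥ fun i => A i.succ 0) * x 0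
      + star (Fin.tail x) ⬝ᵥ A.submatrix Fin.succ Fin.succ *ᵥ Fin.tail x := by
  simp only [dotProduct, mulVec, Fin.sum_univ_succ, Pi.star_apply, Fin.tail, submatrix_apply,
    mul_add, Finset.sum_add_distrib, Finset.mul_sum, Finset.sum_mul, mul_assoc]
  ring

def schurComplement₀₀ [DivisionRing R] [StarRing R] (A : Matrix (Fin (n + 1)) (Fin (n + 1)) R) :
    Matrix (Fin n) (Fin n) R :=
  of fun i j => A i.succ j.succ - (1 / A 0 0) * (star (A 0 i.succ) * A 0 j.succ)

lemma star_dotProduct_schurComplement₀₀_mulVec [Field R] [StarRing R]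
    (A : Matrix (Fin (n + 1)) (Fin (n + 1)) R) (y : Fin n → R) :
    star y ⬝ᵥ schurComplement₀₀ A *ᵥ y = star y ⬝ᵥ A.submatrix Fin.succ Fin.succ *ᵥ y
      - star (Fin.tail (A 0) ⬝ᵥ y) * (Fin.tail (A 0) ⬝ᵥ y) / A 0 0 := by
  have hS : schurComplement₀₀ A = A.submatrix Fin.succ Fin.succ
      - (1 / A 0 0) • vecMulVec (star (Fin.tail (A 0))) (Fin.tail (A 0)) := by
    ext i j
    simp [schurComplement₀₀, vecMulVec_apply, Fin.tail]
  rw [hS, sub_mulVec, dotProduct_sub, smul_mulVec, vecMulVec_mulVec, dotProduct_smul,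
    dotProduct_smul, star_dotProduct_star]
  simp only [smul_eq_mul, MulOpposite.smul_eq_mul_unop, MulOpposite.unop_op]
  ring

lemma star_dotProduct_mulVec_eq_schur [Field R] [StarRing R]
    {A : Matrix (Fin (n + 1)) (Fin (n + 1)) R} (hA : A.IsHermitian) (h₀ : A 0 0 ≠ 0)
    (x : Fin (n + 1) → R) :
    star x ⬝ᵥ A *ᵥ x =
      let c := x 0 + (Fin.tail (A 0) ⬝ᵥ Fin.tail x) / A 0 0
      A 0 0 * (star c * c) + star (Fin.tail x) ⬝ᵥ schurComplement₀₀ A *ᵥ Fin.tail x := by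
  have hcol : (fun i => A i.succ 0) = star (Fin.tail (A 0)) :=
    funext fun i => (hA.apply i.succ 0).symm
  have h₀₀ : star (A 0 0) = A 0 0 := hA.apply 0 0
  rw [star_dotProduct_mulVec_fin_succ, star_dotProduct_schurComplement₀₀_mulVec, hcol,
    star_dotProduct_star]
  simp only [star_add, star_div₀, h₀₀]
  field_simp
  ring

variable {𝕜 : Type*} [RCLike 𝕜]

lemma PosSemidef.norm_tail_dotProduct_sq_le {A : Matrix (Fin (n + 1)) (Fin (n + 1)) 𝕜}
    (hA : A.PosSemidef) (hdiag : ∀ i, re (A i i) ≤ re (A 0 0)) (y : Fin n → 𝕜) :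
    ‖Fin.tail (A 0) ⬝ᵥ y‖ ^ 2 ≤ n * re (A 0 0) ^ 2 * ∑ i, ‖y i‖ ^ 2 :=
  calc ‖Fin.tail (A 0) ⬝ᵥ y‖ ^ 2 ≤ (∑ j : Fin n, ‖A 0 j.succ‖ ^ 2) * ∑ i, ‖y i‖ ^ 2 :=
        norm_dotProduct_sq_le _ _
    _ ≤ (∑ _j : Fin n, re (A 0 0) ^ 2) * ∑ i, ‖y i‖ ^ 2 := by
        refine mul_le_mul_of_nonneg_right (Finset.sum_le_sum fun j _ => ?_) (by positivity)
        have h₀ : 0 ≤ re (A 0 0) := (RCLike.nonneg_iff.1 hA.diag_nonneg).1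
        nlinarith [hA.norm_apply_sq_le 0 j.succ, hdiag j.succ]
    _ = n * re (A 0 0) ^ 2 * ∑ i, ‖y i‖ ^ 2 := by simp

theorem posSemidef_sub_smul_one_of_schurComplement₀₀
    {A : Matrix (Fin (n + 1)) (Fin (n + 1)) 𝕜} (hA : A.PosDef)
    (hdiag : ∀ i, re (A i i) ≤ re (A 0 0)) {a : ℝ} (ha : 0 ≤ a) (haA : a ≤ re (A 0 0))
    (hS : (schurComplement₀₀ A - a • 1).PosSemidef) :
    (A - (a / (2 * (n + 1)) : ℝ) • 1).PosSemidef := by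
  set α := re (A 0 0)
  have hα : 0 < α := (RCLike.pos_iff.1 hA.diag_pos).1
  have hA₀₀ : A 0 0 = α := (hA.1.coe_re_apply_self 0).symm
  refine .of_dotProduct_mulVec_nonneg (hA.1.sub (isHermitian_one.smul (.all _))) fun x => ?_
  set y := Fin.tail x
  set s := Fin.tail (A 0) ⬝ᵥ y
  set c := x 0 + s / A 0 0
  set r := ∑ i, ‖y i‖ ^ 2
  have hr : 0 ≤ r := by positivity
  have hs : ‖s‖ ^ 2 ≤ n * α ^ 2 * r := hA.posSemidef.norm_tail_dotProduct_sq_le hdiag y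
  have hx₀ : ‖x 0‖ ^ 2 ≤ 2 * ‖c‖ ^ 2 + 2 * (n * r) :=
    calc ‖x 0‖ ^ 2 = ‖c - s / A 0 0‖ ^ 2 := by simp only [c, add_sub_cancel_right]
      _ ≤ (‖c‖ + ‖s / A 0 0‖) ^ 2 := by gcongr; exact norm_sub_le _ _
      _ ≤ 2 * (‖c‖ ^ 2 + ‖s / A 0 0‖ ^ 2) := add_sq_le
      _ ≤ 2 * ‖c‖ ^ 2 + 2 * (n * r) := by
        have : ‖s‖ ^ 2 / α ^ 2 ≤ n * r := by rw [div_le_iff₀ (by positivity)]; linarith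
        rw [norm_div, hA₀₀, norm_ofReal, abs_of_pos hα, div_pow]
        linarith
  have hquad : star x ⬝ᵥ (A - (a / (2 * (n + 1)) : ℝ) • 1) *ᵥ x
      = star y ⬝ᵥ (schurComplement₀₀ A - a • 1) *ᵥ y
        + ((α * ‖c‖ ^ 2 + a * r - a / (2 * (n + 1)) * (‖x 0‖ ^ 2 + r) : ℝ) : 𝕜) := by
    rw [sub_mulVec, dotProduct_sub, star_dotProduct_mulVec_eq_schur hA.1 hA.diag_pos.ne',
      sub_mulVec, dotProduct_sub]
    simp only [c, s, y, r, Fin.tail, smul_mulVec, one_mulVec, dotProduct_smul,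
      star_dotProduct_self_eq, Fin.sum_univ_succ, RCLike.real_smul_eq_coe_mul, RCLike.star_def,
      RCLike.conj_mul, hA₀₀]
    push_cast
    ring
  rw [hquad]
  refine add_nonneg (hS.dotProduct_mulVec_nonneg y) (ofReal_nonneg.2 ?_)
  rw [sub_nonneg, div_mul_eq_mul_div, div_le_iff₀ (by positivity)]
  -- `a (‖x₀‖² + r) ≤ 2a ‖c‖² + (2n + 1) a r ≤ 2(n + 1) (α ‖c‖² + a r)`
  nlinarith [mul_le_mul_of_nonneg_left hx₀ ha, mul_le_mul_of_nonneg_right haA (sq_nonneg ‖c‖),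
    mul_nonneg (n.cast_nonneg : (0 : ℝ) ≤ n) (mul_nonneg hα.le (sq_nonneg ‖c‖)), mul_nonneg ha hr]

lemma le_re_of_posSemidef_schurComplement₀₀_sub {A : Matrix (Fin (n + 2)) (Fin (n + 2)) 𝕜}
    (hA : A.IsHermitian) (h₀ : 0 ≤ re (A 0 0)) (h₁ : re (A 1 1) ≤ re (A 0 0)) {a : ℝ}
    (hS : (schurComplement₀₀ A - a • 1).PosSemidef) : a ≤ re (A 0 0) := by
  have h := (RCLike.nonneg_iff.1 (hS.diag_nonneg (i := 0))).1
  simp only [schurComplement₀₀, sub_apply, of_apply, smul_apply, one_apply_eq, RCLike.star_def,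
    RCLike.conj_mul] at h
  rw [(hA.coe_re_apply_self 0).symm, one_div, ← ofReal_inv, ← ofReal_pow] at h
  simp only [map_sub, re_ofReal_mul, ofReal_re, smul_re, one_re, mul_one,
    Fin.succ_zero_eq_one] at h
  have : 0 ≤ (re (A 0 0))⁻¹ * ‖A 0 1‖ ^ 2 := by positivity
  linarith

end Matrix

/-- Lemma: if `A` is positive definite with maximal (1,1) diagonal entry and the Schur
complement of the (1,1) entry is `≥ a`, then `A ≥ a/(2l)`.  Here the size is
`l = n + 2 ≥ 2`, the row vector `u` has entries `u j = A 0 j.succ`, the lower-right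
block is `B i j = A i.succ j.succ`, and the Schur complement is `B - (1/A₁₁)·u*u`. -/
theorem stmt5 {n : ℕ} (A : Matrix (Fin (n + 2)) (Fin (n + 2)) ℂ) (hA : A.PosDef)
    (hdiag : ∀ i, (A i i).re ≤ (A 0 0).re) (a : ℝ) (ha : 0 < a)
    (hschur : (Matrix.of (fun i j : Fin (n + 1) =>
        A i.succ j.succ - (1 / A 0 0) * (star (A 0 i.succ) * A 0 j.succ)) -
        (a : ℝ) • (1 : Matrix (Fin (n + 1)) (Fin (n + 1)) ℂ)).PosSemidef) :
    (A - (a / (2 * (n + 2)) : ℝ) •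
        (1 : Matrix (Fin (n + 2)) (Fin (n + 2)) ℂ)).PosSemidef := by
  have haA : a ≤ (A 0 0).re := le_re_of_posSemidef_schurComplement₀₀_sub hA.1
    (RCLike.pos_iff.1 hA.diag_pos).1.le (hdiag 1) hschur
  have hε : (a / (2 * (n + 2)) : ℝ) = a / (2 * ((n + 1 : ℕ) + 1)) := by push_cast; ring
  rw [hε]
  exact posSemidef_sub_smul_one_of_schurComplement₀₀ hA hdiag ha.le haA hschur
end

section
/- Let D be a Hermitian n×n complex matrix in block form D = [[A, V],[V*, B]], where A is k×k, B is m×m (k + m = n), and ‖V‖ ≤ 1/2. Let 0 < ε ≤ 1/2 and suppose that B has no eigenvalues in the open interval (−2ε, 2ε). Then B is invertible and C_ε(D) ≤ C_{βε}(A − V·B⁻¹·V*), where β = 2·(‖B⁻¹‖ + 1)². -/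
/-! Let `W` be the span of the eigenvectors of `D` with eigenvalues in `(-ε, ε)`, so that
`‖D x‖ < ε ‖x‖` for nonzero `x ∈ W`, and write `x = (x₁, x₂)`, `D x = (r₁, r₂)`. The gap of `B`
gives `‖B⁻¹‖ ≤ 1 / (2ε)`. Solving the second block row, `x₂ = B⁻¹ (r₂ - V* x₁)`, shows both
`‖x‖ ≤ (2 + ‖B⁻¹‖) ‖x₁‖` and `S x₁ = r₁ - V B⁻¹ r₂` for the Schur complement `S`, whence
`‖S x₁‖ < β ε ‖x₁‖`. Thus `x ↦ x₁` is injective on `W` and maps it onto a subspace on which `S`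
shrinks norms by a factor less than `β ε`. Such a subspace meets the span of the eigenvectors of
`S` with eigenvalues outside `(-β ε, β ε)` trivially, so its dimension is at most
`C_{βε}(S)`. -/

open Matrix

/-- The operator (spectral) norm of a matrix, i.e. the norm of the induced operator
between Euclidean spaces. -/
noncomputable def matNorm {m n : Type*} [Fintype m] [Fintype n] [DecidableEq n]
    (M : Matrix m n ℂ) : ℝ :=
  ‖LinearMap.toContinuousLinearMap (Matrix.toEuclideanLin M)‖

namespace Matrix

variable {ι κ : Type*}

section OperatorNorm

variable [Fintype ι] [Fintype κ] [DecidableEq κ]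

lemma norm_toEuclideanLin_le (M : Matrix ι κ ℂ) (x : EuclideanSpace ℂ κ) :
    ‖toEuclideanLin M x‖ ≤ matNorm M * ‖x‖ :=
  (LinearMap.toContinuousLinearMap (toEuclideanLin M)).le_opNorm x

lemma matNorm_le_bound {M : Matrix ι κ ℂ} {C : ℝ} (hC : 0 ≤ C)
    (h : ∀ x, ‖toEuclideanLin M x‖ ≤ C * ‖x‖) : matNorm M ≤ C :=
  ContinuousLinearMap.opNorm_le_bound _ hC h

open scoped Matrix.Norms.L2Operator in
lemma matNorm_conjTranspose [DecidableEq ι] (M : Matrix ι κ ℂ) : matNorm Mᴴ = matNorm M :=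
  l2_opNorm_conjTranspose M

lemma toEuclideanLin_apply_toEuclideanLin_of_mul_eq_one_s12 {M N : Matrix κ κ ℂ} (h : N * M = 1)
    (y : EuclideanSpace ℂ κ) : toEuclideanLin N (toEuclideanLin M y) = y := by
  rw [← LinearMap.comp_apply, ← toLpLin_mul_same, h, toLpLin_one, LinearMap.id_apply]

lemma isUnit_of_le_norm_toEuclideanLin {M : Matrix κ κ ℂ} {c : ℝ} (hc : 0 < c)
    (h : ∀ x, c * ‖x‖ ≤ ‖toEuclideanLin M x‖) : IsUnit M := by
  have hinj : Function.Injective (toEuclideanLin M) := by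
    rw [← LinearMap.ker_eq_bot, LinearMap.ker_eq_bot']
    intro x hx
    have hcx := h x
    rw [hx, norm_zero] at hcx
    exact norm_le_zero_iff.1 (nonpos_of_mul_nonpos_right hcx hc)
  exact mulVec_injective_iff_isUnit.1 fun v w hvw =>
    WithLp.toLp_injective 2 (hinj (congrArg (WithLp.toLp 2) hvw))

lemma matNorm_nonsing_inv_le {M : Matrix κ κ ℂ} {c : ℝ} (hc : 0 < c)
    (h : ∀ x, c * ‖x‖ ≤ ‖toEuclideanLin M x‖) : matNorm M⁻¹ ≤ c⁻¹ := by
  have hM : M * M⁻¹ = 1 :=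
    mul_nonsing_inv M ((isUnit_iff_isUnit_det M).1 (isUnit_of_le_norm_toEuclideanLin hc h))
  refine matNorm_le_bound (inv_nonneg.2 hc.le) fun y => (le_inv_mul_iff₀ hc).2 ?_
  simpa [toEuclideanLin_apply_toEuclideanLin_of_mul_eq_one_s12 hM] using h (toEuclideanLin M⁻¹ y)

end OperatorNorm

namespace IsHermitian

variable [Fintype ι] [DecidableEq ι] {M : Matrix ι ι ℂ}

lemma eigenvectorBasis_repr_toEuclideanLin_s12 (hM : M.IsHermitian) (x : EuclideanSpace ℂ ι)
    (i : ι) :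
    hM.eigenvectorBasis.repr (toEuclideanLin M x) i
      = hM.eigenvalues i * hM.eigenvectorBasis.repr x i := by
  have hev : toEuclideanLin M (hM.eigenvectorBasis i)
      = (hM.eigenvalues i : ℂ) • hM.eigenvectorBasis i := by
    ext j
    simpa [toLpLin_apply, Complex.real_smul] using congrFun (hM.mulVec_eigenvectorBasis i) j
  rw [OrthonormalBasis.repr_apply_apply, OrthonormalBasis.repr_apply_apply,
    ← isSymmetric_toEuclideanLin_iff.2 hM, hev, inner_smul_left, Complex.conj_ofReal]

lemma norm_toEuclideanLin_sq_s12 (hM : M.IsHermitian) (x : EuclideanSpace ℂ ι) :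
    ‖toEuclideanLin M x‖ ^ 2
      = ∑ i, hM.eigenvalues i ^ 2 * ‖hM.eigenvectorBasis.repr x i‖ ^ 2 := by
  rw [← hM.eigenvectorBasis.repr.norm_map, EuclideanSpace.norm_sq_eq]
  simp [eigenvectorBasis_repr_toEuclideanLin_s12, mul_pow]

lemma norm_sq_eq_sum_repr (hM : M.IsHermitian) (x : EuclideanSpace ℂ ι) :
    ‖x‖ ^ 2 = ∑ i, ‖hM.eigenvectorBasis.repr x i‖ ^ 2 := by
  rw [← hM.eigenvectorBasis.repr.norm_map, EuclideanSpace.norm_sq_eq]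

def eigenSpan (hM : M.IsHermitian) (s : Set ℝ) : Submodule ℂ (EuclideanSpace ℂ ι) :=
  Submodule.span ℂ (hM.eigenvectorBasis '' (hM.eigenvalues ⁻¹' s))

lemma mem_eigenSpan_iff (hM : M.IsHermitian) {s : Set ℝ} {x : EuclideanSpace ℂ ι} :
    x ∈ hM.eigenSpan s ↔ ∀ i, hM.eigenvalues i ∉ s → hM.eigenvectorBasis.repr x i = 0 := by
  rw [eigenSpan, ← hM.eigenvectorBasis.coe_toBasis, Module.Basis.mem_span_image]
  simp [Set.subset_def, not_imp_comm]

lemma finrank_eigenSpan (hM : M.IsHermitian) (s : Set ℝ) :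
    Module.finrank ℂ (hM.eigenSpan s) = Nat.card {i // hM.eigenvalues i ∈ s} := by
  classical
  rw [eigenSpan, Set.image_eq_range, finrank_span_eq_card, Nat.card_eq_fintype_card]
  · rfl
  exact hM.eigenvectorBasis.orthonormal.linearIndependent.comp _ Subtype.val_injective

lemma norm_toEuclideanLin_lt_of_mem_eigenSpan (hM : M.IsHermitian) {c : ℝ}
    {x : EuclideanSpace ℂ ι} (hx : x ∈ hM.eigenSpan (Set.Ioo (-c) c)) (hx0 : x ≠ 0) :
    ‖toEuclideanLin M x‖ < c * ‖x‖ := by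
  obtain ⟨i₀, hi₀⟩ : ∃ i, hM.eigenvectorBasis.repr x i ≠ 0 := by
    by_contra! h
    exact hx0 (hM.eigenvectorBasis.repr.injective (by ext i; simpa using h i))
  have hmem : ∀ i, hM.eigenvectorBasis.repr x i ≠ 0 → hM.eigenvalues i ∈ Set.Ioo (-c) c :=
    fun i => not_imp_comm.1 (hM.mem_eigenSpan_iff.1 hx i)
  have hsq_lt : ∀ i, hM.eigenvectorBasis.repr x i ≠ 0 → hM.eigenvalues i ^ 2 < c ^ 2 :=
    fun i hi => sq_lt_sq' (hmem i hi).1 (hmem i hi).2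
  have hc : 0 < c := by linarith [(hmem i₀ hi₀).1, (hmem i₀ hi₀).2]
  refine lt_of_pow_lt_pow_left₀ 2 (by positivity) ?_
  rw [hM.norm_toEuclideanLin_sq_s12, mul_pow, hM.norm_sq_eq_sum_repr, Finset.mul_sum]
  refine Finset.sum_lt_sum (fun i _ => ?_) ⟨i₀, Finset.mem_univ _, ?_⟩
  · by_cases hi : hM.eigenvectorBasis.repr x i = 0
    · simp [hi]
    · exact mul_le_mul_of_nonneg_right (hsq_lt i hi).le (by positivity)
  · exact mul_lt_mul_of_pos_right (hsq_lt i₀ hi₀) (by positivity)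

lemma le_norm_toEuclideanLin_of_mem_eigenSpan (hM : M.IsHermitian) {c : ℝ}
    {x : EuclideanSpace ℂ ι} (hx : x ∈ hM.eigenSpan (Set.Ioo (-c) c)ᶜ) :
    c * ‖x‖ ≤ ‖toEuclideanLin M x‖ := by
  rcases lt_or_ge c 0 with hc | hc
  · exact (mul_nonpos_of_nonpos_of_nonneg hc.le (norm_nonneg x)).trans (norm_nonneg _)
  refine le_of_pow_le_pow_left₀ two_ne_zero (norm_nonneg _) ?_
  rw [hM.norm_toEuclideanLin_sq_s12, mul_pow, hM.norm_sq_eq_sum_repr, Finset.mul_sum]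
  refine Finset.sum_le_sum fun i _ => ?_
  by_cases hi : hM.eigenvectorBasis.repr x i = 0
  · simp [hi]
  · have := not_imp_comm.1 (hM.mem_eigenSpan_iff.1 hx i) hi
    simp only [Set.mem_compl_iff, Set.mem_Ioo, not_and_or, not_lt] at this
    have hsq : c ^ 2 ≤ hM.eigenvalues i ^ 2 := by rcases this with h | h <;> nlinarith
    exact mul_le_mul_of_nonneg_right hsq (by positivity)

lemma eigCountIoo_eq (hM : M.IsHermitian) (a b : ℝ) :
    eigCountIoo M a b = Nat.card {i // hM.eigenvalues i ∈ Set.Ioo a b} :=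
  dif_pos hM

lemma le_norm_toEuclideanLin_of_eigCountIoo_eq_zero (hM : M.IsHermitian) {c : ℝ}
    (h : eigCountIoo M (-c) c = 0) (x : EuclideanSpace ℂ ι) :
    c * ‖x‖ ≤ ‖toEuclideanLin M x‖ := by
  rw [hM.eigCountIoo_eq, Finite.card_eq_zero_iff] at h
  exact hM.le_norm_toEuclideanLin_of_mem_eigenSpan
    (hM.mem_eigenSpan_iff.2 fun i hi => (h.false ⟨i, not_not.1 hi⟩).elim)

lemma finrank_le_eigCountIoo (hM : M.IsHermitian) {c : ℝ}
    (U : Submodule ℂ (EuclideanSpace ℂ ι)) (hU : ∀ u ∈ U, u ≠ 0 → ‖toEuclideanLin M u‖ < c * ‖u‖) :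
    Module.finrank ℂ U ≤ eigCountIoo M (-c) c := by
  classical
  have hdisj : Disjoint U (hM.eigenSpan (Set.Ioo (-c) c)ᶜ) := by
    refine Submodule.disjoint_def.2 fun u hu hu' => ?_
    by_contra hu0
    exact (hU u hu hu0).not_ge (hM.le_norm_toEuclideanLin_of_mem_eigenSpan hu')
  have hdim := Submodule.finrank_add_finrank_le_of_disjoint hdisj
  have hcompl := Fintype.card_subtype_compl fun i => hM.eigenvalues i ∈ Set.Ioo (-c) c
  have hle := Fintype.card_subtype_le fun i => hM.eigenvalues i ∈ Set.Ioo (-c) c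
  rw [hM.finrank_eigenSpan, finrank_euclideanSpace, Nat.card_eq_fintype_card] at hdim
  rw [hM.eigCountIoo_eq, Nat.card_eq_fintype_card]
  simp only [Set.mem_compl_iff] at hdim
  omega

end IsHermitian

lemma eigCountIoo_le_of_norm_lt [Fintype ι] [Fintype κ] [DecidableEq ι] [DecidableEq κ]
    {M : Matrix ι ι ℂ} {M' : Matrix κ κ ℂ} (hM : M.IsHermitian) (hM' : M'.IsHermitian)
    (f : EuclideanSpace ℂ ι →ₗ[ℂ] EuclideanSpace ℂ κ) {c c' : ℝ}
    (hf : ∀ x, ‖toEuclideanLin M x‖ < c * ‖x‖ → ‖toEuclideanLin M' (f x)‖ < c' * ‖f x‖) :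
    eigCountIoo M (-c) c ≤ eigCountIoo M' (-c') c' := by
  set W := hM.eigenSpan (Set.Ioo (-c) c)
  have hW : ∀ x ∈ W, x ≠ 0 → ‖toEuclideanLin M' (f x)‖ < c' * ‖f x‖ := fun x hx hx0 =>
    hf x (hM.norm_toEuclideanLin_lt_of_mem_eigenSpan hx hx0)
  have hinj : Function.Injective (f.domRestrict W) := by
    rw [← LinearMap.ker_eq_bot, LinearMap.ker_eq_bot']
    rintro ⟨x, hx⟩ hfx
    by_contra hx0
    have hlt := hW x hx (by simpa using hx0)
    simp_all
  calc eigCountIoo M (-c) c = Module.finrank ℂ W := by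
        rw [hM.eigCountIoo_eq, hM.finrank_eigenSpan]
    _ = Module.finrank ℂ (W.map f) := by
        rw [← LinearMap.range_domRestrict, LinearMap.finrank_range_of_inj hinj]
    _ ≤ eigCountIoo M' (-c') c' := by
        refine hM'.finrank_le_eigCountIoo _ ?_
        rintro _ ⟨x, hx, rfl⟩ hx0
        exact hW x hx (by rintro rfl; simp at hx0)

section Blocks

def projInl : EuclideanSpace ℂ (ι ⊕ κ) →ₗ[ℂ] EuclideanSpace ℂ ι where
  toFun x := WithLp.toLp 2 fun i => x (Sum.inl i)
  map_add' _ _ := rfl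
  map_smul' _ _ := rfl

def projInr : EuclideanSpace ℂ (ι ⊕ κ) →ₗ[ℂ] EuclideanSpace ℂ κ where
  toFun x := WithLp.toLp 2 fun i => x (Sum.inr i)
  map_add' _ _ := rfl
  map_smul' _ _ := rfl

@[simp]
lemma projInl_apply (x : EuclideanSpace ℂ (ι ⊕ κ)) (i : ι) : projInl x i = x (Sum.inl i) := rfl

@[simp]
lemma projInr_apply (x : EuclideanSpace ℂ (ι ⊕ κ)) (i : κ) : projInr x i = x (Sum.inr i) := rfl

variable [Fintype ι] [Fintype κ]

lemma norm_sq_eq_projInl_add_projInr (x : EuclideanSpace ℂ (ι ⊕ κ)) :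
    ‖x‖ ^ 2 = ‖projInl x‖ ^ 2 + ‖projInr x‖ ^ 2 := by
  simp [EuclideanSpace.norm_sq_eq, Fintype.sum_sum_type]

lemma norm_projInl_le (x : EuclideanSpace ℂ (ι ⊕ κ)) : ‖projInl x‖ ≤ ‖x‖ := by
  refine le_of_pow_le_pow_left₀ two_ne_zero (norm_nonneg _) ?_
  rw [norm_sq_eq_projInl_add_projInr]
  exact le_add_of_nonneg_right (sq_nonneg _)

lemma norm_projInr_le (x : EuclideanSpace ℂ (ι ⊕ κ)) : ‖projInr x‖ ≤ ‖x‖ := by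
  refine le_of_pow_le_pow_left₀ two_ne_zero (norm_nonneg _) ?_
  rw [norm_sq_eq_projInl_add_projInr]
  exact le_add_of_nonneg_left (sq_nonneg _)

lemma norm_le_norm_projInl_add_norm_projInr (x : EuclideanSpace ℂ (ι ⊕ κ)) :
    ‖x‖ ≤ ‖projInl x‖ + ‖projInr x‖ := by
  refine le_of_pow_le_pow_left₀ two_ne_zero (by positivity) ?_
  rw [norm_sq_eq_projInl_add_projInr]
  nlinarith [norm_nonneg (projInl x), norm_nonneg (projInr x)]

variable [DecidableEq ι] [DecidableEq κ] (A : Matrix ι ι ℂ) (V : Matrix ι κ ℂ) (C : Matrix κ ι ℂ)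
  (B : Matrix κ κ ℂ) (x : EuclideanSpace ℂ (ι ⊕ κ))

lemma projInl_toEuclideanLin_fromBlocks :
    projInl (toEuclideanLin (fromBlocks A V C B) x)
      = toEuclideanLin A (projInl x) + toEuclideanLin V (projInr x) := by
  ext i
  simp [toLpLin_apply, fromBlocks_mulVec, mulVec, dotProduct]

lemma projInr_toEuclideanLin_fromBlocks :
    projInr (toEuclideanLin (fromBlocks A V C B) x)
      = toEuclideanLin C (projInl x) + toEuclideanLin B (projInr x) := by
  ext i
  simp [toLpLin_apply, fromBlocks_mulVec, mulVec, dotProduct]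

end Blocks

section SchurComplement

variable [Fintype ι] [Fintype κ] [DecidableEq ι] [DecidableEq κ]
  {A : Matrix ι ι ℂ} {V : Matrix ι κ ℂ} {C : Matrix κ ι ℂ} {B : Matrix κ κ ℂ} {ε : ℝ}
  {x : EuclideanSpace ℂ (ι ⊕ κ)}

lemma norm_le_of_norm_toEuclideanLin_fromBlocks_le (hB : B⁻¹ * B = 1)
    (hC : matNorm C ≤ 1 / 2) (hε : matNorm B⁻¹ * ε ≤ 1 / 2)
    (hx : ‖toEuclideanLin (fromBlocks A V C B) x‖ ≤ ε * ‖x‖) :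
    ‖x‖ ≤ (2 + matNorm B⁻¹) * ‖projInl x‖ := by
  set N := matNorm B⁻¹
  set r := toEuclideanLin (fromBlocks A V C B) x
  have hN : 0 ≤ N := norm_nonneg _
  have hx₂ : projInr x = toEuclideanLin B⁻¹ (projInr r - toEuclideanLin C (projInl x)) := by
    rw [projInr_toEuclideanLin_fromBlocks, add_sub_cancel_left,
      toEuclideanLin_apply_toEuclideanLin_of_mul_eq_one_s12 hB]
  have hx₂_le : ‖projInr x‖ ≤ N * ‖projInr r‖ + N / 2 * ‖projInl x‖ := by
    calc ‖projInr x‖ ≤ N * ‖projInr r - toEuclideanLin C (projInl x)‖ :=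
          hx₂ ▸ norm_toEuclideanLin_le _ _
      _ ≤ N * (‖projInr r‖ + 1 / 2 * ‖projInl x‖) := by
          gcongr
          exact (norm_sub_le _ _).trans (add_le_add_right
            ((norm_toEuclideanLin_le _ _).trans (by gcongr)) _)
      _ = N * ‖projInr r‖ + N / 2 * ‖projInl x‖ := by ring
  have hNr : N * ‖projInr r‖ ≤ 1 / 2 * ‖x‖ := calc
    N * ‖projInr r‖ ≤ N * (ε * ‖x‖) := by gcongr; exact (norm_projInr_le r).trans hx
    _ = N * ε * ‖x‖ := by ring
    _ ≤ 1 / 2 * ‖x‖ := by gcongr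
  linarith [norm_le_norm_projInl_add_norm_projInr x]

lemma norm_toEuclideanLin_schur_lt (hB : B⁻¹ * B = 1) (hV : matNorm V ≤ 1 / 2)
    (hC : matNorm C ≤ 1 / 2) (hε : matNorm B⁻¹ * ε ≤ 1 / 2)
    (hx : ‖toEuclideanLin (fromBlocks A V C B) x‖ < ε * ‖x‖) :
    ‖toEuclideanLin (A - V * B⁻¹ * C) (projInl x)‖
      < 2 * (matNorm B⁻¹ + 1) ^ 2 * ε * ‖projInl x‖ := by
  set N := matNorm B⁻¹
  set r := toEuclideanLin (fromBlocks A V C B) x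
  have hN : 0 ≤ N := norm_nonneg _
  have hε₀ : 0 < ε := pos_of_mul_pos_left ((norm_nonneg r).trans_lt hx) (norm_nonneg x)
  have hSx : toEuclideanLin (A - V * B⁻¹ * C) (projInl x)
      = projInl r - toEuclideanLin V (toEuclideanLin B⁻¹ (projInr r)) := by
    simp only [r, projInl_toEuclideanLin_fromBlocks, projInr_toEuclideanLin_fromBlocks, map_add,
      toEuclideanLin_apply_toEuclideanLin_of_mul_eq_one_s12 hB, map_sub, toLpLin_mul_same,
      LinearMap.comp_apply, LinearMap.sub_apply]
    abel
  calc ‖toEuclideanLin (A - V * B⁻¹ * C) (projInl x)‖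
      ≤ ‖projInl r‖ + 1 / 2 * (N * ‖projInr r‖) := by
        rw [hSx]
        exact (norm_sub_le _ _).trans (add_le_add_right ((norm_toEuclideanLin_le _ _).trans
          (mul_le_mul hV (norm_toEuclideanLin_le _ _) (norm_nonneg _) (by norm_num))) _)
    _ ≤ (1 + N / 2) * ‖r‖ := by nlinarith [norm_projInl_le r, norm_projInr_le r]
    _ < (1 + N / 2) * (ε * ‖x‖) := by gcongr
    _ ≤ (1 + N / 2) * (ε * ((2 + N) * ‖projInl x‖)) := by
        gcongr; exact norm_le_of_norm_toEuclideanLin_fromBlocks_le hB hC hε hx.le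
    _ ≤ 2 * (N + 1) ^ 2 * ε * ‖projInl x‖ := by
        have : 0 ≤ ε * ‖projInl x‖ * (3 / 2 * N ^ 2 + 2 * N) := by positivity
        linarith

end SchurComplement

end Matrix

theorem stmt12_general {k m : ℕ} (A : Matrix (Fin k) (Fin k) ℂ) (B : Matrix (Fin m) (Fin m) ℂ)
    (V : Matrix (Fin k) (Fin m) ℂ) (hA : A.IsHermitian) (hB : B.IsHermitian)
    (hV : matNorm V ≤ 1 / 2) (ε : ℝ) (hε : 0 < ε)
    (hgap : eigCountIoo B (-(2 * ε)) (2 * ε) = 0) :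
    IsUnit B ∧
      eigCountIoo (Matrix.fromBlocks A V Vᴴ B) (-ε) ε ≤
        eigCountIoo (A - V * B⁻¹ * Vᴴ)
          (-(2 * (matNorm B⁻¹ + 1) ^ 2 * ε)) (2 * (matNorm B⁻¹ + 1) ^ 2 * ε) := by
  have hB_lower : ∀ x, 2 * ε * ‖x‖ ≤ ‖toEuclideanLin B x‖ :=
    hB.le_norm_toEuclideanLin_of_eigCountIoo_eq_zero hgap
  have hB_unit : IsUnit B := isUnit_of_le_norm_toEuclideanLin (by positivity) hB_lower
  have hNε : matNorm B⁻¹ * ε ≤ 1 / 2 := calc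
    matNorm B⁻¹ * ε ≤ (2 * ε)⁻¹ * ε := by
      gcongr; exact matNorm_nonsing_inv_le (by positivity) hB_lower
    _ = 1 / 2 := by field_simp
  refine ⟨hB_unit, eigCountIoo_le_of_norm_lt (hA.fromBlocks rfl hB)
    (hA.sub (isHermitian_mul_mul_conjTranspose V hB.inv)) projInl fun x hx => ?_⟩
  exact norm_toEuclideanLin_schur_lt (nonsing_inv_mul B ((isUnit_iff_isUnit_det B).1 hB_unit))
    hV ((matNorm_conjTranspose V).trans_le hV) hNε hx

theorem stmt12 {k m : ℕ} (A : Matrix (Fin k) (Fin k) ℂ) (B : Matrix (Fin m) (Fin m) ℂ)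
    (V : Matrix (Fin k) (Fin m) ℂ) (hA : A.IsHermitian) (hB : B.IsHermitian)
    (hV : matNorm V ≤ 1 / 2) (ε : ℝ) (hε : 0 < ε)
    (hε2 : ε ≤ 1 / 2) (hgap : eigCountIoo B (-(2 * ε)) (2 * ε) = 0) :
    IsUnit B ∧
      eigCountIoo (Matrix.fromBlocks A V Vᴴ B) (-ε) ε ≤
        eigCountIoo (A - V * B⁻¹ * Vᴴ)
          (-(2 * (matNorm B⁻¹ + 1) ^ 2 * ε)) (2 * (matNorm B⁻¹ + 1) ^ 2 * ε) :=
  stmt12_general A B V hA hB hV ε hε hgap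
end

section
/- Let A be a positive definite Hermitian n×n complex matrix, and let P₁ and P₂ be n×n orthogonal projection matrices (Hermitian idempotents) with P₁·P₂ = 0, and set P = P₁ + P₂. Then ‖P·A·P‖ ≤ 2·max(‖P₁·A·P₁‖, ‖P₂·A·P₂‖). -/
/-!
For `a ≥ 0` and self-adjoint `p, q`, the identity
`(p + q) a (p + q) + (p - q) a (p - q) = 2 (p a p + q a q)` gives
`(p + q) a (p + q) ≤ 2 (p a p + q a q)`. A compression by a projection satisfies
`p a p ≤ ‖p a p‖ p`, so with `c` the larger of the two norms the right side is at most
`2c (p + q) ≤ 2c`, since `p + q` is again a projection. For positive elements of a C⋆-algebra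
such an order bound by a scalar is a norm bound.
-/

open Matrix
open scoped ComplexOrder

lemma conj_add_le_two_mul_add_conj {R : Type*} [Ring R] [StarRing R] [PartialOrder R]
    [StarOrderedRing R] {a p q : R} (ha : 0 ≤ a) (hp : IsSelfAdjoint p) (hq : IsSelfAdjoint q) :
    (p + q) * a * (p + q) ≤ 2 • (p * a * p + q * a * q) := by
  have hpq : 0 ≤ (p - q) * a * (p - q) := by
    simpa only [(hp.sub hq).star_eq] using star_left_conjugate_nonneg ha (p - q)
  calc (p + q) * a * (p + q) ≤ (p + q) * a * (p + q) + (p - q) * a * (p - q) :=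
        le_add_of_nonneg_right hpq
    _ = 2 • (p * a * p + q * a * q) := by noncomm_ring

namespace IsStarProjection

lemma mul_mul_self_le_smul {R : Type*} [Ring R] [StarRing R] [PartialOrder R]
    [StarOrderedRing R] [Algebra ℝ R] {p b : R} (hp : IsStarProjection p) {c : ℝ}
    (hb : b ≤ algebraMap ℝ R c) : p * b * p ≤ c • p := by
  calc p * b * p = star p * b * p := by rw [hp.isSelfAdjoint.star_eq]
    _ ≤ star p * algebraMap ℝ R c * p := star_left_conjugate_le_conjugate hb p
    _ = c • p := by
      rw [hp.isSelfAdjoint.star_eq, ← Algebra.commutes, mul_assoc, hp.isIdempotentElem.eq,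
        Algebra.smul_def]

variable {A : Type*} [CStarAlgebra A] [PartialOrder A] [StarOrderedRing A]

lemma mul_mul_self_le_norm_smul {p a : A} (hp : IsStarProjection p) (ha : IsSelfAdjoint a) :
    p * a * p ≤ ‖p * a * p‖ • p := by
  have hpap : IsSelfAdjoint (p * a * p) := by
    simpa only [hp.isSelfAdjoint.star_eq] using ha.conjugate' p
  have h := hp.mul_mul_self_le_smul hpap.le_algebraMap_norm_self
  have hcompress : p * (p * a * p) * p = p * a * p := by
    rw [← mul_assoc, ← mul_assoc, hp.isIdempotentElem.eq, mul_assoc _ p p,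
      hp.isIdempotentElem.eq]
  rwa [hcompress] at h

theorem norm_conj_add_le_two_mul_max {a p q : A} (ha : 0 ≤ a) (hp : IsStarProjection p)
    (hq : IsStarProjection q) (hpq : p * q = 0) :
    ‖(p + q) * a * (p + q)‖ ≤ 2 * max ‖p * a * p‖ ‖q * a * q‖ := by
  set c := max ‖p * a * p‖ ‖q * a * q‖
  have hc : 0 ≤ 2 * c := by positivity
  have hp_le : p * a * p ≤ c • p :=
    (hp.mul_mul_self_le_norm_smul ha.isSelfAdjoint).trans
      (smul_le_smul_of_nonneg_right (le_max_left _ _) hp.nonneg)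
  have hq_le : q * a * q ≤ c • q :=
    (hq.mul_mul_self_le_norm_smul ha.isSelfAdjoint).trans
      (smul_le_smul_of_nonneg_right (le_max_right _ _) hq.nonneg)
  have hnonneg : 0 ≤ (p + q) * a * (p + q) := by
    simpa only [(hp.isSelfAdjoint.add hq.isSelfAdjoint).star_eq]
      using star_left_conjugate_nonneg ha (p + q)
  rw [CStarAlgebra.norm_le_iff_le_algebraMap _ hc hnonneg]
  calc (p + q) * a * (p + q) ≤ 2 • (p * a * p + q * a * q) :=
        conj_add_le_two_mul_add_conj ha hp.isSelfAdjoint hq.isSelfAdjoint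
    _ ≤ 2 • (c • p + c • q) := by gcongr
    _ = (2 * c) • (p + q) := by
      rw [← smul_add, ← Nat.cast_smul_eq_nsmul ℝ, smul_smul, Nat.cast_ofNat]
    _ ≤ (2 * c) • 1 := smul_le_smul_of_nonneg_left (hp.add hq hpq).le_one hc
    _ = algebraMap ℝ A (2 * c) := (Algebra.algebraMap_eq_smul_one _).symm

end IsStarProjection

theorem stmt13 {n : ℕ} (A P₁ P₂ : Matrix (Fin n) (Fin n) ℂ) (hA : A.PosDef)
    (h₁s : P₁ᴴ = P₁) (h₁i : P₁ * P₁ = P₁) (h₂s : P₂ᴴ = P₂) (h₂i : P₂ * P₂ = P₂)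
    (h₁₂ : P₁ * P₂ = 0) :
    matNorm ((P₁ + P₂) * A * (P₁ + P₂)) ≤
      2 * max (matNorm (P₁ * A * P₁)) (matNorm (P₂ * A * P₂)) := by
  -- `matNorm` is definitionally the norm of the L2-operator C⋆-algebra structure on matrices.
  open scoped Matrix.Norms.L2Operator MatrixOrder in
  exact IsStarProjection.norm_conj_add_le_two_mul_max (nonneg_iff_posSemidef.mpr hA.posSemidef)
    ⟨h₁i, h₁s⟩ ⟨h₂i, h₂s⟩ h₁₂
end

section
/- Let A be a positive definite Hermitian n×n complex matrix, and let P₁ and P₂ be n×n orthogonal projection matrices (Hermitian idempotents) with P₁·P₂ = 0. Then ‖P₁·A·P₂‖² ≤ ‖P₁·A·P₁‖·‖P₂·A·P₂‖. -/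
open Matrix
open scoped ComplexOrder

/-! Factoring the positive matrix as `A = S* S`, the blocks are Gram products: `P₁ A P₂ = (S P₁)* (S P₂)` and
`Pᵢ A Pᵢ = (S Pᵢ)* (S Pᵢ)`, so the inequality is submultiplicativity of the norm together
with the C⋆-identity `‖T* T‖ = ‖T‖²`. -/

section CStarRing

variable {E : Type*} [NonUnitalNormedRing E] [StarRing E] [CStarRing E]

theorem norm_star_mul_star_mul_self_mul (s x : E) :
    ‖star x * (star s * s) * x‖ = ‖s * x‖ ^ 2 := by
  rw [sq, ← CStarRing.norm_star_mul_self, star_mul, mul_assoc, mul_assoc, mul_assoc]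

theorem sq_norm_star_mul_star_mul_self_mul_le (s x y : E) :
    ‖star x * (star s * s) * y‖ ^ 2 ≤
      ‖star x * (star s * s) * x‖ * ‖star y * (star s * s) * y‖ := by
  have hgram : star x * (star s * s) * y = star (s * x) * (s * y) := by
    simp only [star_mul, mul_assoc]
  calc ‖star x * (star s * s) * y‖ ^ 2 ≤ (‖s * x‖ * ‖s * y‖) ^ 2 := by
        rw [hgram, ← norm_star (s * x)]
        gcongr
        exact norm_mul_le _ _
    _ = ‖star x * (star s * s) * x‖ * ‖star y * (star s * s) * y‖ := by
        rw [norm_star_mul_star_mul_self_mul, norm_star_mul_star_mul_self_mul, mul_pow]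

end CStarRing

open scoped MatrixOrder in
theorem Matrix.PosSemidef.exists_eq_star_mul_self {n : Type*} [Fintype n] [DecidableEq n]
    {A : Matrix n n ℂ} (hA : A.PosSemidef) : ∃ S : Matrix n n ℂ, A = star S * S :=
  ⟨CFC.sqrt A, by
    rw [(CFC.sqrt_nonneg A).isSelfAdjoint.star_eq, CFC.sqrt_mul_sqrt_self A hA.nonneg]⟩

open scoped Matrix.Norms.L2Operator in
theorem matNorm_eq_l2_opNorm {n : Type*} [Fintype n] [DecidableEq n] (M : Matrix n n ℂ) :
    matNorm M = ‖M‖ :=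
  (Matrix.l2_opNorm_def M).symm

open scoped Matrix.Norms.L2Operator in
theorem stmt14_general {n : ℕ} (A P₁ P₂ : Matrix (Fin n) (Fin n) ℂ) (hA : A.PosDef)
    (h₁s : P₁ᴴ = P₁) (h₂s : P₂ᴴ = P₂) :
    matNorm (P₁ * A * P₂) ^ 2 ≤ matNorm (P₁ * A * P₁) * matNorm (P₂ * A * P₂) := by
  obtain ⟨S, rfl⟩ := hA.posSemidef.exists_eq_star_mul_self
  simp only [matNorm_eq_l2_opNorm]
  simpa only [star_eq_conjTranspose, h₁s, h₂s] using sq_norm_star_mul_star_mul_self_mul_le S P₁ P₂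

theorem stmt14 {n : ℕ} (A P₁ P₂ : Matrix (Fin n) (Fin n) ℂ) (hA : A.PosDef)
    (h₁s : P₁ᴴ = P₁) (h₁i : P₁ * P₁ = P₁) (h₂s : P₂ᴴ = P₂) (h₂i : P₂ * P₂ = P₂)
    (h₁₂ : P₁ * P₂ = 0) :
    matNorm (P₁ * A * P₂) ^ 2 ≤ matNorm (P₁ * A * P₁) * matNorm (P₂ * A * P₂) :=
  stmt14_general A P₁ P₂ hA h₁s h₂s
end

section
/- Let A and J be Hermitian k×k complex matrices, and let a be a real number with |a| ≥ 2 and ‖A‖ ≤ 1 (so that A − a·I is invertible); assume also that J + a·I is invertible. If |det((A − a·I)⁻¹ + (J + a·I)⁻¹)| ≤ (1/(16|a|)) · ((|a| − 1)/(2(|a| + 1)²))^{k−1}, then at least one of the following holds: (i) (2(|a| + 1)²)^{−k} · |det(A + J)| ≤ |det((A − a·I)⁻¹ + (J + a·I)⁻¹)|; or (ii) A + J is invertible and (1/(16|a|)) · (2(|a| + 1)² · ‖(A + J)⁻¹‖)^{1−k} ≤ |det((A − a·I)⁻¹ + (J + a·I)⁻¹)|. -/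
open Matrix

/-! With `C = A - a • 1` and `D = J + a • 1` one has `C⁻¹ + D⁻¹ = C⁻¹ (C + D) D⁻¹` and
`C + D = A + J`, so `|det (A + J)| = |det (C⁻¹ + D⁻¹)| |det C| |det D|`, while
`|det C| ≤ ‖C‖ᵏ ≤ (|a| + 1)ᵏ`. If (i) fails, then `|det D| > (2 (|a| + 1))ᵏ`, so `‖D‖ > 2 (|a| + 1)`
and `A + J` stretches some vector `x` by more than `|a| + 1`.

The singular value bound `|det M| ‖z‖ ≤ ‖M‖ᵏ⁻¹ ‖M z‖` (all singular values are at most `‖M‖`, the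
smallest is at most `‖M z‖ / ‖z‖`), applied to `M = D (A + J)⁻¹ = 1 - C (A + J)⁻¹` and
`z = (A + J) x`, gives `|det D| ≤ 2 (1 + (|a| + 1) ‖(A + J)⁻¹‖)ᵏ⁻¹ |det (A + J)|`. This is (ii) when
`‖(A + J)⁻¹‖ ≥ 1 / (|a| + 1)`; otherwise it contradicts the smallness of `|det (C⁻¹ + D⁻¹)|`. -/

open Module
open scoped InnerProductSpace Matrix.Norms.L2Operator

theorem matNorm_eq_norm {m n : Type*} [Fintype m] [Fintype n] [DecidableEq n]
    (M : Matrix m n ℂ) : matNorm M = ‖M‖ :=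
  rfl

theorem Fintype.prod_le_mul_pow_card_sub_one {ι : Type*} [Fintype ι] [DecidableEq ι]
    {f : ι → ℝ} {B : ℝ} (h0 : ∀ j, 0 ≤ f j) (hB : ∀ j, f j ≤ B) (i : ι) :
    ∏ j, f j ≤ f i * B ^ (Fintype.card ι - 1) := by
  rw [← Finset.mul_prod_erase _ _ (Finset.mem_univ i)]
  refine mul_le_mul_of_nonneg_left ?_ (h0 i)
  calc ∏ j ∈ Finset.univ.erase i, f j ≤ ∏ _j ∈ Finset.univ.erase i, B :=
        Finset.prod_le_prod (fun j _ => h0 j) fun j _ => hB j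
    _ = B ^ (Fintype.card ι - 1) := by simp [Finset.card_erase_of_mem]

theorem LinearMap.IsSymmetric.re_inner_map_self_eq_sum {𝕜 E : Type*} [RCLike 𝕜]
    [NormedAddCommGroup E] [InnerProductSpace 𝕜 E] [FiniteDimensional 𝕜 E] {T : E →ₗ[𝕜] E}
    {n : ℕ} (hT : T.IsSymmetric) (hn : finrank 𝕜 E = n) (x : E) :
    RCLike.re ⟪x, T x⟫_𝕜 =
      ∑ i, hT.eigenvalues hn i * ‖⟪hT.eigenvectorBasis hn i, x⟫_𝕜‖ ^ 2 := by
  rw [← (hT.eigenvectorBasis hn).sum_inner_mul_inner x (T x), map_sum]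
  refine Finset.sum_congr rfl fun i _ => ?_
  rw [← hT, apply_eigenvectorBasis, inner_smul_left, RCLike.conj_ofReal, ← inner_conj_symm x,
    mul_left_comm, RCLike.conj_mul, ← RCLike.ofReal_pow, ← RCLike.ofReal_mul, RCLike.ofReal_re]

namespace ContinuousLinearMap

variable {𝕜 E : Type*} [RCLike 𝕜] [NormedAddCommGroup E] [InnerProductSpace 𝕜 E]
  [FiniteDimensional 𝕜 E]

theorem re_inner_adjoint_comp_self_apply (T : E →L[𝕜] E) (x : E) :
    RCLike.re ⟪x, (LinearMap.adjoint (T : E →ₗ[𝕜] E) ∘ₗ (T : E →ₗ[𝕜] E)) x⟫_𝕜 = ‖T x‖ ^ 2 := by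
  rw [LinearMap.comp_apply, LinearMap.adjoint_inner_right, inner_self_eq_norm_sq]
  rfl

theorem norm_det_sq_eq_prod_eigenvalues (T : E →L[𝕜] E) :
    ‖LinearMap.det (T : E →ₗ[𝕜] E)‖ ^ 2 =
      ∏ i, (LinearMap.isSymmetric_adjoint_comp_self (T : E →ₗ[𝕜] E)).eigenvalues rfl i := by
  have h := (T : E →ₗ[𝕜] E).normDet_sq
  rw [LinearMap.normDet_eq_norm_det,
    (LinearMap.isSymmetric_adjoint_comp_self _).det_eq_prod_eigenvalues rfl] at h
  exact_mod_cast h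

theorem eigenvalues_adjoint_comp_self_mem_Icc (T : E →L[𝕜] E) (i : Fin (finrank 𝕜 E)) :
    (LinearMap.isSymmetric_adjoint_comp_self (T : E →ₗ[𝕜] E)).eigenvalues rfl i ∈
      Set.Icc 0 (‖T‖ ^ 2) := by
  set hG := LinearMap.isSymmetric_adjoint_comp_self (T : E →ₗ[𝕜] E)
  have hb := (hG.eigenvectorBasis rfl).orthonormal.1 i
  have h : hG.eigenvalues rfl i = ‖T (hG.eigenvectorBasis rfl i)‖ ^ 2 := by
    rw [← re_inner_adjoint_comp_self_apply, hG.apply_eigenvectorBasis, inner_smul_right,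
      inner_self_eq_one_of_norm_eq_one hb, mul_one, RCLike.ofReal_re]
  rw [h]
  refine ⟨by positivity, ?_⟩
  gcongr
  simpa [hb] using T.le_opNorm (hG.eigenvectorBasis rfl i)

theorem norm_det_le_pow (T : E →L[𝕜] E) :
    ‖LinearMap.det (T : E →ₗ[𝕜] E)‖ ≤ ‖T‖ ^ finrank 𝕜 E := by
  refine (pow_le_pow_iff_left₀ (by positivity) (by positivity) two_ne_zero).mp ?_
  rw [norm_det_sq_eq_prod_eigenvalues, ← pow_mul, mul_comm, pow_mul]
  calc _ ≤ ∏ _i : Fin (finrank 𝕜 E), ‖T‖ ^ 2 := Finset.prod_le_prod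
        (fun i _ => (eigenvalues_adjoint_comp_self_mem_Icc T i).1)
        fun i _ => (eigenvalues_adjoint_comp_self_mem_Icc T i).2
    _ = _ := by simp

theorem norm_det_mul_norm_le (T : E →L[𝕜] E) (x : E) :
    ‖LinearMap.det (T : E →ₗ[𝕜] E)‖ * ‖x‖ ≤ ‖T‖ ^ (finrank 𝕜 E - 1) * ‖T x‖ := by
  set hG := LinearMap.isSymmetric_adjoint_comp_self (T : E →ₗ[𝕜] E)
  have hsq : (‖LinearMap.det (T : E →ₗ[𝕜] E)‖ * ‖x‖) ^ 2 ≤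
      (‖T‖ ^ (finrank 𝕜 E - 1) * ‖T x‖) ^ 2 := by
    -- expand `‖x‖²` and `‖T x‖²` in an eigenbasis of `T† T` and compare termwise
    rw [mul_pow, mul_pow, norm_det_sq_eq_prod_eigenvalues,
      ← (hG.eigenvectorBasis rfl).sum_sq_norm_inner_right, ← re_inner_adjoint_comp_self_apply,
      hG.re_inner_map_self_eq_sum rfl, Finset.mul_sum, Finset.mul_sum]
    refine Finset.sum_le_sum fun i _ => ?_
    have hprod := Fintype.prod_le_mul_pow_card_sub_one
      (fun j => (eigenvalues_adjoint_comp_self_mem_Icc T j).1)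
      (fun j => (eigenvalues_adjoint_comp_self_mem_Icc T j).2) i
    rw [Fintype.card_fin, ← pow_mul, mul_comm 2, pow_mul] at hprod
    calc _ ≤ _ := mul_le_mul_of_nonneg_right hprod (by positivity)
      _ = _ := by ring
  exact (pow_le_pow_iff_left₀ (by positivity) (by positivity) two_ne_zero).mp hsq

end ContinuousLinearMap

namespace Matrix

variable {𝕜 n : Type*} [RCLike 𝕜] [Fintype n] [DecidableEq n]

theorem det_toEuclideanCLM (M : Matrix n n 𝕜) :
    LinearMap.det (toEuclideanCLM (n := n) (𝕜 := 𝕜) M : EuclideanSpace 𝕜 n →ₗ[𝕜] _) =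
      M.det := by
  rw [coe_toEuclideanCLM_eq_toEuclideanLin, toEuclideanLin_eq_toLin_orthonormal,
    LinearMap.det_toLin]

theorem norm_det_le_pow (M : Matrix n n 𝕜) : ‖M.det‖ ≤ ‖M‖ ^ Fintype.card n := by
  simpa [det_toEuclideanCLM, l2_opNorm_toEuclideanCLM] using
    (toEuclideanCLM (n := n) (𝕜 := 𝕜) M).norm_det_le_pow

theorem norm_det_mul_norm_le (M : Matrix n n 𝕜) (x : EuclideanSpace 𝕜 n) :
    ‖M.det‖ * ‖x‖ ≤ ‖M‖ ^ (Fintype.card n - 1) * ‖toEuclideanCLM (n := n) (𝕜 := 𝕜) M x‖ := by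
  simpa [det_toEuclideanCLM, l2_opNorm_toEuclideanCLM] using
    (toEuclideanCLM (n := n) (𝕜 := 𝕜) M).norm_det_mul_norm_le x

theorem l2_opNorm_one_le : ‖(1 : Matrix n n 𝕜)‖ ≤ 1 := by
  rw [← l2_opNorm_toEuclideanCLM, map_one]
  exact ContinuousLinearMap.norm_id_le

theorem l2_opNorm_sub_smul_one_le (A : Matrix n n 𝕜) (c : 𝕜) : ‖A - c • 1‖ ≤ ‖A‖ + ‖c‖ :=
  calc ‖A - c • 1‖ ≤ ‖A‖ + ‖c‖ * ‖(1 : Matrix n n 𝕜)‖ :=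
        (norm_sub_le _ _).trans (by gcongr; exact norm_smul_le _ _)
    _ ≤ ‖A‖ + ‖c‖ := by
        gcongr; exact mul_le_of_le_one_right (norm_nonneg c) l2_opNorm_one_le

theorem isUnit_sub_smul_one_of_l2_opNorm_lt {A : Matrix n n 𝕜} {c : 𝕜} (h : ‖A‖ < ‖c‖) :
    IsUnit (A - c • 1) := by
  have hA : ‖A‖ * ‖(1 : Matrix n n 𝕜)‖ < ‖c‖ :=
    lt_of_le_of_lt (mul_le_of_le_one_right (norm_nonneg A) l2_opNorm_one_le) h
  have := spectrum.mem_resolventSet_of_norm_lt_mul hA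
  rw [spectrum.mem_resolventSet_iff, Algebra.algebraMap_eq_smul_one] at this
  simpa using this.neg

theorem det_inv_add_inv_mul_det_mul_det {C D : Matrix n n 𝕜} (hC : IsUnit C) (hD : IsUnit D) :
    (C⁻¹ + D⁻¹).det * C.det * D.det = (C + D).det := by
  have hC' := det_nonsing_inv_mul_det _ ((isUnit_iff_isUnit_det C).mp hC)
  have hD' := det_nonsing_inv_mul_det _ ((isUnit_iff_isUnit_det D).mp hD)
  rw [inv_add_inv (iff_of_true hC hD), det_mul, det_mul]
  linear_combination ((C + D).det * D⁻¹.det * D.det) * hC' + (C + D).det * hD'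

theorem exists_mul_norm_lt_norm_toEuclideanCLM_add {C D : Matrix n n 𝕜} {r : ℝ} (hC : ‖C‖ ≤ r)
    (hD : (2 * r) ^ Fintype.card n < ‖D.det‖) :
    ∃ x, r * ‖x‖ < ‖toEuclideanCLM (n := n) (𝕜 := 𝕜) (C + D) x‖ := by
  by_contra! h
  have hCD : ‖C + D‖ ≤ r :=
    (toEuclideanCLM (n := n) (𝕜 := 𝕜) (C + D)).opNorm_le_bound ((norm_nonneg C).trans hC) h
  have hD' : ‖D‖ ≤ 2 * r :=
    calc ‖D‖ = ‖(C + D) - C‖ := by rw [add_sub_cancel_left]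
      _ ≤ ‖C + D‖ + ‖C‖ := norm_sub_le _ _
      _ ≤ 2 * r := by linarith
  exact hD.not_ge <| (norm_det_le_pow D).trans (pow_le_pow_left₀ (norm_nonneg D) hD' _)

theorem norm_det_sub_le {S C : Matrix n n 𝕜} (hS : IsUnit S) {r : ℝ} (hC : ‖C‖ ≤ r)
    {x : EuclideanSpace 𝕜 n} (hx : r * ‖x‖ < ‖toEuclideanCLM (n := n) (𝕜 := 𝕜) S x‖) :
    ‖(S - C).det‖ ≤ 2 * (1 + r * ‖S⁻¹‖) ^ (Fintype.card n - 1) * ‖S.det‖ := by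
  have hr : 0 ≤ r := (norm_nonneg C).trans hC
  set z := toEuclideanCLM (n := n) (𝕜 := 𝕜) S x
  set M := 1 - C * S⁻¹
  have hMS : M * S = S - C := by
    rw [sub_mul, one_mul, mul_assoc, nonsing_inv_mul S ((isUnit_iff_isUnit_det S).mp hS), mul_one]
  have hMnorm : ‖M‖ ≤ 1 + r * ‖S⁻¹‖ :=
    calc ‖M‖ ≤ ‖(1 : Matrix n n 𝕜)‖ + ‖C‖ * ‖S⁻¹‖ :=
          (norm_sub_le _ _).trans (by gcongr; exact l2_opNorm_mul _ _)
      _ ≤ 1 + r * ‖S⁻¹‖ := by gcongr; exact l2_opNorm_one_le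
  have hMz : ‖toEuclideanCLM (n := n) (𝕜 := 𝕜) M z‖ ≤ 2 * ‖z‖ := by
    have : toEuclideanCLM (n := n) (𝕜 := 𝕜) M z = z - toEuclideanCLM (n := n) (𝕜 := 𝕜) C x := by
      rw [← ContinuousLinearMap.comp_apply, ← ContinuousLinearMap.mul_def, ← map_mul, hMS,
        map_sub]
      rfl
    rw [this]
    calc _ ≤ ‖z‖ + ‖C‖ * ‖x‖ :=
          (norm_sub_le _ _).trans (by gcongr; exact ContinuousLinearMap.le_opNorm _ _)
      _ ≤ 2 * ‖z‖ := by nlinarith [norm_nonneg x]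
  have hz : 0 < ‖z‖ := lt_of_le_of_lt (by positivity) hx
  have key : ‖M.det‖ * ‖z‖ ≤ 2 * (1 + r * ‖S⁻¹‖) ^ (Fintype.card n - 1) * ‖z‖ :=
    calc _ ≤ ‖M‖ ^ (Fintype.card n - 1) * ‖toEuclideanCLM (n := n) (𝕜 := 𝕜) M z‖ :=
          norm_det_mul_norm_le M z
      _ ≤ (1 + r * ‖S⁻¹‖) ^ (Fintype.card n - 1) * (2 * ‖z‖) := by gcongr
      _ = _ := by ring
  rw [← hMS, det_mul, norm_mul]
  exact mul_le_mul_of_nonneg_right (le_of_mul_le_mul_right key hz) (norm_nonneg _)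

theorem isUnit_add_and_one_le_of_lt_norm_det_add {C D : Matrix n n 𝕜} (hC : IsUnit C)
    (hD : IsUnit D) {r : ℝ} (hCr : ‖C‖ ≤ r)
    (h : (2 * r ^ 2) ^ Fintype.card n * ‖(C⁻¹ + D⁻¹).det‖ < ‖(C + D).det‖) :
    IsUnit (C + D) ∧ 1 ≤ 2 * ‖(C⁻¹ + D⁻¹).det‖ * r ^ Fintype.card n *
      (1 + r * ‖(C + D)⁻¹‖) ^ (Fintype.card n - 1) := by
  set k := Fintype.card n
  set T := ‖(C⁻¹ + D⁻¹).det‖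
  have hr : 0 ≤ r := (norm_nonneg C).trans hCr
  have hG : ‖(C + D).det‖ = T * ‖C.det‖ * ‖D.det‖ := by
    rw [← det_inv_add_inv_mul_det_mul_det hC hD, norm_mul, norm_mul]
  have hc : ‖C.det‖ ≤ r ^ k := (norm_det_le_pow C).trans (pow_le_pow_left₀ (norm_nonneg C) hCr k)
  have hT : 0 < T := by
    refine (norm_nonneg _).lt_of_ne fun hT => ?_
    rw [hG, ← show 0 = T from hT] at h
    simp at h
  have hd : (2 * r) ^ k < ‖D.det‖ := by
    by_contra! hd
    have : T * ‖C.det‖ * ‖D.det‖ ≤ T * (2 * r ^ 2) ^ k := by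
      rw [mul_assoc, show (2 * r ^ 2) ^ k = r ^ k * (2 * r) ^ k by rw [← mul_pow]; ring_nf]
      gcongr
    linarith
  obtain ⟨x, hx⟩ := exists_mul_norm_lt_norm_toEuclideanCLM_add hCr hd
  have hG0 : 0 < ‖(C + D).det‖ := lt_of_le_of_lt (by positivity) h
  have hS : IsUnit (C + D) :=
    (isUnit_iff_isUnit_det _).mpr (isUnit_iff_ne_zero.mpr (norm_pos_iff.mp hG0))
  refine ⟨hS, ?_⟩
  have hDle := norm_det_sub_le hS hCr hx
  rw [add_sub_cancel_left] at hDle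
  refine le_of_mul_le_mul_right ?_ hG0
  calc 1 * ‖(C + D).det‖ = T * ‖C.det‖ * ‖D.det‖ := by rw [one_mul, hG]
    _ ≤ T * r ^ k * (2 * (1 + r * ‖(C + D)⁻¹‖) ^ (k - 1) * ‖(C + D).det‖) := by gcongr
    _ = _ := by ring

end Matrix

theorem one_div_mul_inv_pow_le {s T N : ℝ} {m : ℕ} (hs : 2 ≤ s) (hN : 0 ≤ N) (hT0 : 0 ≤ T)
    (hT : T ≤ 1 / (16 * s) * ((s - 1) / (2 * (s + 1) ^ 2)) ^ m)
    (h : 1 ≤ 2 * T * (s + 1) ^ (m + 1) * (1 + (s + 1) * N) ^ m) :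
    1 / (16 * s) * ((2 * (s + 1) ^ 2 * N) ^ m)⁻¹ ≤ T := by
  suffices key : 1 ≤ 16 * s * T * (2 * (s + 1) ^ 2 * N) ^ m by
    have hpos : 0 < (2 * (s + 1) ^ 2 * N) ^ m :=
      (pow_nonneg (by positivity) m).lt_of_ne fun h0 => by rw [← h0, mul_zero] at key; linarith
    rw [one_div, ← mul_inv, inv_le_iff_one_le_mul₀ (by positivity)]
    linarith
  rcases le_or_gt 1 ((s + 1) * N) with hN1 | hN1
  · have hQ : (s + 1) * (1 + (s + 1) * N) ≤ 2 * (s + 1) ^ 2 * N := by nlinarith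
    calc 1 ≤ 2 * T * (s + 1) ^ (m + 1) * (1 + (s + 1) * N) ^ m := h
      _ = 2 * (s + 1) * T * ((s + 1) * (1 + (s + 1) * N)) ^ m := by
        rw [mul_pow, pow_succ]; ring
      _ ≤ 16 * s * T * (2 * (s + 1) ^ 2 * N) ^ m := by
        gcongr ?_ * T * ?_
        · linarith
        · exact pow_le_pow_left₀ (by positivity) hQ m
  · exfalso
    set β := (s - 1) / (2 * (s + 1) ^ 2)
    have hβ0 : 0 ≤ β := div_nonneg (by linarith) (by positivity)
    have hβ : 2 * (s + 1) * β ≤ 1 := by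
      rw [← mul_div_assoc, div_le_one (by positivity)]; nlinarith
    have h1 : 1 ≤ 2 * (s + 1) / (16 * s) * (2 * (s + 1) * β) ^ m :=
      calc 1 ≤ 2 * T * (s + 1) ^ (m + 1) * (1 + (s + 1) * N) ^ m := h
        _ ≤ 2 * (1 / (16 * s) * β ^ m) * (s + 1) ^ (m + 1) * 2 ^ m := by
          gcongr; linarith
        _ = 2 * (s + 1) / (16 * s) * (2 * (s + 1) * β) ^ m := by
          rw [mul_pow, mul_pow, pow_succ]; field_simp
    have h2 : (2 * (s + 1) * β) ^ m ≤ 1 := pow_le_one₀ (by positivity) hβ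
    have h3 : 2 * (s + 1) / (16 * s) < 1 := by rw [div_lt_one (by positivity)]; linarith
    exact h1.not_gt (mul_lt_one_of_nonneg_of_lt_one_left (by positivity) h3 h2)

theorem stmt15_general {k : ℕ} (A J : Matrix (Fin k) (Fin k) ℂ)
    (a : ℝ) (ha : 2 ≤ |a|)
    (hAn : matNorm A ≤ 1) (hJa : IsUnit (J + (a : ℂ) • 1))
    (hdet : ‖((A - (a : ℂ) • 1)⁻¹ + (J + (a : ℂ) • 1)⁻¹).det‖ ≤
      1 / (16 * |a|) * ((|a| - 1) / (2 * (|a| + 1) ^ 2)) ^ (k - 1)) :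
    (2 * (|a| + 1) ^ 2) ^ (-(k : ℤ)) * ‖(A + J).det‖ ≤
        ‖((A - (a : ℂ) • 1)⁻¹ + (J + (a : ℂ) • 1)⁻¹).det‖ ∨
      (IsUnit (A + J) ∧
        1 / (16 * |a|) * (2 * (|a| + 1) ^ 2 * matNorm (A + J)⁻¹) ^ (1 - (k : ℤ)) ≤
          ‖((A - (a : ℂ) • 1)⁻¹ + (J + (a : ℂ) • 1)⁻¹).det‖) := by
  rw [matNorm_eq_norm] at hAn ⊢
  have ha' : ‖(a : ℂ)‖ = |a| := by rw [Complex.norm_real, Real.norm_eq_abs]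
  have hCr : ‖A - (a : ℂ) • 1‖ ≤ |a| + 1 :=
    (A.l2_opNorm_sub_smul_one_le a).trans (by rw [ha']; linarith)
  have hC : IsUnit (A - (a : ℂ) • 1) :=
    Matrix.isUnit_sub_smul_one_of_l2_opNorm_lt (by rw [ha']; linarith)
  have hCD : A - (a : ℂ) • 1 + (J + (a : ℂ) • 1) = A + J := by abel
  by_cases hcase : ‖(A + J).det‖ ≤
      (2 * (|a| + 1) ^ 2) ^ k * ‖((A - (a : ℂ) • 1)⁻¹ + (J + (a : ℂ) • 1)⁻¹).det‖
  · left
    rwa [_root_.zpow_neg, zpow_natCast, inv_mul_le_iff₀ (by positivity)]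
  right
  have hk : k ≠ 0 := by rintro rfl; simp at hcase
  obtain ⟨hS, hbound⟩ := Matrix.isUnit_add_and_one_le_of_lt_norm_det_add hC hJa hCr
    (by rw [Fintype.card_fin, hCD]; exact not_le.mp hcase)
  rw [hCD] at hS hbound
  refine ⟨hS, ?_⟩
  obtain ⟨m, rfl⟩ := Nat.exists_eq_add_one_of_ne_zero hk
  simp only [Fintype.card_fin, Nat.add_sub_cancel] at hbound hdet
  rw [show (1 : ℤ) - ((m + 1 : ℕ) : ℤ) = -(m : ℤ) by push_cast; ring, _root_.zpow_neg,
    zpow_natCast]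
  exact one_div_mul_inv_pow_le ha (norm_nonneg _) (norm_nonneg _) hdet hbound

theorem stmt15 {k : ℕ} (A J : Matrix (Fin k) (Fin k) ℂ)
    (hA : A.IsHermitian) (hJ : J.IsHermitian) (a : ℝ) (ha : 2 ≤ |a|)
    (hAn : matNorm A ≤ 1) (hJa : IsUnit (J + (a : ℂ) • 1))
    (hdet : ‖((A - (a : ℂ) • 1)⁻¹ + (J + (a : ℂ) • 1)⁻¹).det‖ ≤
      1 / (16 * |a|) * ((|a| - 1) / (2 * (|a| + 1) ^ 2)) ^ (k - 1)) :
    (2 * (|a| + 1) ^ 2) ^ (-(k : ℤ)) * ‖(A + J).det‖ ≤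
        ‖((A - (a : ℂ) • 1)⁻¹ + (J + (a : ℂ) • 1)⁻¹).det‖ ∨
      (IsUnit (A + J) ∧
        1 / (16 * |a|) * (2 * (|a| + 1) ^ 2 * matNorm (A + J)⁻¹) ^ (1 - (k : ℤ)) ≤
          ‖((A - (a : ℂ) • 1)⁻¹ + (J + (a : ℂ) • 1)⁻¹).det‖) :=
  stmt15_general A J a ha hAn hJa hdet
end

section
/- For (u, v) ∈ ℝ², let σ(u, v) denote the 2×2 real symmetric matrix [[u, v],[v, −u]]. Let J be a 2×2 real symmetric matrix, let C > 0, β > 0, and let μ be a finite Borel measure on ℝ² whose support is contained in the closed unit disc and which is β-regular with constant C, i.e. μ(S) ≤ C·|S|^β for every Lebesgue-measurable set S ⊆ ℝ², where |S| denotes the two-dimensional Lebesgue measure of S. Then for every ε ∈ (0, 1], μ({(u, v) ∈ ℝ² : the symmetric matrix σ(u, v) + J has an eigenvalue in the open interval (−ε, ε)}) ≤ C·(4πε)^β. -/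
/-!
The matrix `σ(u, v) + J` has trace `tr J` and eigenvalues `tr J / 2 ± |(u, v) - w|` for a centre
`w` depending only on `J`, so an eigenvalue in `(-ε, ε)` puts `(u, v)` in an annulus of width `2ε`
around `w`. In polar coordinates about `w`, a circle of radius `r` meets the unit disc in an arc of
length at most `2π` (by Jordan's inequality, on each half-circle a chord of length `≤ 2` subtends
an angle `≤ π / r`), so the annulus meets the disc in area at most `4πε`, and `β`-regularity
concludes.
-/

open MeasureTheory Matrix
open Real Set Metric

namespace Complex

lemma polarCoord_symm_eq_mul_exp (p : ℝ × ℝ) :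
    Complex.polarCoord.symm p = p.1 * exp (I * p.2) := by
  rw [Complex.polarCoord_symm_apply, mul_comm I, exp_mul_I, ofReal_cos, ofReal_sin]

lemma dist_polarCoord_symm_same_radius {r : ℝ} (hr : 0 ≤ r) (x y : ℝ) :
    dist (Complex.polarCoord.symm (r, x)) (Complex.polarCoord.symm (r, y)) =
      r * |2 * Real.sin ((x - y) / 2)| := by
  have hexp : exp (I * x) = exp (I * y) * exp (I * ↑(x - y)) := by
    rw [← exp_add]; push_cast; ring_nf
  rw [dist_eq_norm, polarCoord_symm_eq_mul_exp, polarCoord_symm_eq_mul_exp, hexp,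
    show (r : ℂ) * (exp (I * y) * exp (I * ↑(x - y))) - r * exp (I * y) =
      r * exp (I * y) * (exp (I * ↑(x - y)) - 1) by ring,
    norm_mul, norm_mul, norm_exp_I_mul_ofReal_sub_one, norm_real,
    mul_comm I, norm_exp_ofReal_mul_I, Real.norm_of_nonneg hr,
    Real.norm_eq_abs, mul_one]

lemma mul_abs_sub_le_dist_polarCoord_symm {r x y : ℝ} (hr : 0 ≤ r) (hxy : |x - y| ≤ π) :
    2 / π * r * |x - y| ≤
      dist (Complex.polarCoord.symm (r, x)) (Complex.polarCoord.symm (r, y)) := by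
  have hjordan := mul_abs_le_abs_sin (x := (x - y) / 2) (by rw [abs_div, abs_two]; linarith)
  rw [dist_polarCoord_symm_same_radius hr, abs_mul, abs_two]
  rw [abs_div, abs_two] at hjordan
  nlinarith

end Complex

lemma volume_le_of_polarCoord_symm_mem_closedBall {c : ℂ} {r R : ℝ} (hr : 0 < r) {T : Set ℝ}
    (hT : ∀ θ ∈ T, Complex.polarCoord.symm (r, θ) ∈ closedBall c R)
    (hTπ : ∀ x ∈ T, ∀ y ∈ T, |x - y| ≤ π) : volume T ≤ ENNReal.ofReal (π * R / r) := by
  refine (Real.volume_le_diam T).trans (ediam_le_of_forall_dist_le fun x hx y hy => ?_)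
  have hchord := (Complex.mul_abs_sub_le_dist_polarCoord_symm hr.le (hTπ x hx y hy)).trans
    ((dist_triangle_right _ _ c).trans (add_le_add (hT x hx) (hT y hy)))
  rw [Real.dist_eq, le_div_iff₀ hr]
  calc |x - y| * r = π / 2 * (2 / π * r * |x - y|) := by field_simp
    _ ≤ π / 2 * (R + R) := by gcongr
    _ = π * R := by ring

lemma ofReal_mul_volume_arc_le (c : ℂ) {r R : ℝ} (hr : 0 < r) (hR : 0 ≤ R) :
    ENNReal.ofReal r *
        volume {θ ∈ Ioo (-π) π | Complex.polarCoord.symm (r, θ) ∈ closedBall c R} ≤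
      ENNReal.ofReal (2 * π * R) := by
  set S := {θ ∈ Ioo (-π) π | Complex.polarCoord.symm (r, θ) ∈ closedBall c R}
  have hhalf : ∀ a, volume (S ∩ Icc a (a + π)) ≤ ENNReal.ofReal (π * R / r) := fun a =>
    volume_le_of_polarCoord_symm_mem_closedBall hr (fun θ hθ => hθ.1.2) fun x hx y hy => by
      rw [abs_le]; constructor <;> linarith [hx.2.1, hx.2.2, hy.2.1, hy.2.2]
  have hsplit : S ⊆ S ∩ Icc (-π) (-π + π) ∪ S ∩ Icc 0 (0 + π) := fun θ hθ => by
    rcases le_total θ 0 with h | h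
    · exact Or.inl ⟨hθ, hθ.1.1.le, by linarith⟩
    · exact Or.inr ⟨hθ, h, by linarith [hθ.1.2]⟩
  calc ENNReal.ofReal r * volume S
      ≤ ENNReal.ofReal r * (ENNReal.ofReal (π * R / r) + ENNReal.ofReal (π * R / r)) := by
        gcongr
        exact (measure_mono hsplit).trans
          ((measure_union_le _ _).trans (add_le_add (hhalf _) (hhalf _)))
    _ = ENNReal.ofReal (2 * π * R) := by
        rw [← ENNReal.ofReal_add (by positivity) (by positivity), ← ENNReal.ofReal_mul hr.le]
        congr 1
        field_simp
        ring

lemma setLIntegral_indicator_polarCoord_symm_le (a b : ℝ) (c : ℂ) {R : ℝ} (hR : 0 ≤ R) {r : ℝ}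
    (hr : 0 < r) :
    ∫⁻ θ in Ioo (-π) π, ENNReal.ofReal r •
        ({z : ℂ | ‖z‖ ∈ Ioo a b} ∩ closedBall c R).indicator 1 (Complex.polarCoord.symm (r, θ)) ≤
      (Ioo a b).indicator (fun _ => ENNReal.ofReal (2 * π * R)) r := by
  set A := {z : ℂ | ‖z‖ ∈ Ioo a b} ∩ closedBall c R
  have hnorm : ∀ θ, ‖Complex.polarCoord.symm (r, θ)‖ = r := fun θ => by
    rw [Complex.norm_polarCoord_symm, abs_of_pos hr]
  by_cases hab : r ∈ Ioo a b
  · set B := {θ | Complex.polarCoord.symm (r, θ) ∈ closedBall c R}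
    have hfun : ∀ θ, ENNReal.ofReal r • A.indicator 1 (Complex.polarCoord.symm (r, θ)) =
        B.indicator (fun _ => ENNReal.ofReal r) θ := fun θ => by
      by_cases hθ : θ ∈ B
      · have hθA : Complex.polarCoord.symm (r, θ) ∈ A := ⟨show _ ∈ Ioo a b by rwa [hnorm], hθ⟩
        rw [indicator_of_mem hθA, indicator_of_mem hθ, Pi.one_apply, smul_eq_mul, mul_one]
      · rw [indicator_of_notMem (fun h => hθ h.2), indicator_of_notMem hθ, smul_zero]
    simp_rw [hfun, indicator_of_mem hab]
    refine (lintegral_indicator_const_le _ _).trans ?_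
    rw [Measure.restrict_apply' measurableSet_Ioo, inter_comm]
    exact ofReal_mul_volume_arc_le c hr hR
  · have hfun : ∀ θ, ENNReal.ofReal r • A.indicator 1 (Complex.polarCoord.symm (r, θ)) =
        (0 : ENNReal) := fun θ => by
      rw [indicator_of_notMem (fun h => hab (hnorm θ ▸ h.1)), smul_zero]
    simp_rw [hfun, lintegral_zero, indicator_of_notMem hab, le_refl]

lemma volume_norm_mem_Ioo_inter_closedBall_le (a b : ℝ) (c : ℂ) {R : ℝ} (hR : 0 ≤ R) :
    volume ({z : ℂ | ‖z‖ ∈ Ioo a b} ∩ closedBall c R) ≤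
      ENNReal.ofReal (2 * π * R * (b - a)) := by
  set A := {z : ℂ | ‖z‖ ∈ Ioo a b} ∩ closedBall c R
  have hA : MeasurableSet A :=
    (measurableSet_Ioo.preimage measurable_norm).inter measurableSet_closedBall
  rw [← lintegral_indicator_one hA, ← Complex.lintegral_comp_polarCoord_symm,
    polarCoord_target, Measure.volume_eq_prod, ← Measure.prod_restrict]
  calc _ ≤ ∫⁻ r in Ioi 0, ∫⁻ θ in Ioo (-π) π,
          ENNReal.ofReal r • A.indicator 1 (Complex.polarCoord.symm (r, θ)) :=
        lintegral_prod_le _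
    _ ≤ ∫⁻ r in Ioi 0, (Ioo a b).indicator (fun _ => ENNReal.ofReal (2 * π * R)) r :=
        setLIntegral_mono (measurable_const.indicator measurableSet_Ioo) fun r hr =>
          setLIntegral_indicator_polarCoord_symm_le a b c hR hr
    _ ≤ ∫⁻ r, (Ioo a b).indicator (fun _ => ENNReal.ofReal (2 * π * R)) r :=
        setLIntegral_le_lintegral _ _
    _ = ENNReal.ofReal (2 * π * R * (b - a)) := by
        rw [lintegral_indicator_const measurableSet_Ioo, Real.volume_Ioo,
          ← ENNReal.ofReal_mul (by positivity)]

lemma volume_dist_mem_Ioo_inter_closedBall_le (w c : ℂ) (a b : ℝ) {R : ℝ} (hR : 0 ≤ R) :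
    volume ({z : ℂ | dist z w ∈ Ioo a b} ∩ closedBall c R) ≤
      ENNReal.ofReal (2 * π * R * (b - a)) := by
  have htranslate : {z : ℂ | dist z w ∈ Ioo a b} ∩ closedBall c R =
      (· + -w) ⁻¹' ({z : ℂ | ‖z‖ ∈ Ioo a b} ∩ closedBall (c - w) R) := by
    ext z
    simp only [mem_inter_iff, mem_ofPred_eq, mem_preimage, mem_closedBall, dist_eq_norm,
      ← sub_eq_add_neg, sub_sub_sub_cancel_right]
  rw [htranslate, measure_preimage_add_right]
  exact volume_norm_mem_Ioo_inter_closedBall_le a b (c - w) hR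

lemma Matrix.mem_spectrum_fin_two_iff {K : Type*} [Field K] (M : Matrix (Fin 2) (Fin 2) K)
    (t : K) :
    t ∈ spectrum K M ↔ t ^ 2 - M.trace * t + M.det = 0 := by
  rw [mem_spectrum_iff_isRoot_charpoly, charpoly_fin_two, Polynomial.IsRoot.def]
  simp

lemma mem_spectrum_sigma_add_iff_dist_eq {J : Matrix (Fin 2) (Fin 2) ℝ} (hJ : J.IsSymm)
    (u v t : ℝ) :
    t ∈ spectrum ℝ (!![u, v; v, -u] + J) ↔
      dist (⟨u, v⟩ : ℂ) ⟨(J 1 1 - J 0 0) / 2, -J 0 1⟩ = |t - (J 0 0 + J 1 1) / 2| := by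
  rw [Matrix.mem_spectrum_fin_two_iff, trace_fin_two, det_fin_two, Complex.dist_eq_re_im,
    ← Real.sqrt_sq_eq_abs, Real.sqrt_inj (by positivity) (by positivity)]
  simp only [Matrix.add_apply, of_apply, cons_val', cons_val_zero, cons_val_one, empty_val',
    cons_val_fin_one, hJ.apply 0 1]
  constructor <;> intro h <;> linear_combination (-1) * h

lemma dist_mem_Ioo_of_mem_spectrum_sigma_add {J : Matrix (Fin 2) (Fin 2) ℝ} (hJ : J.IsSymm)
    {u v t ε : ℝ} (ht : t ∈ spectrum ℝ (!![u, v; v, -u] + J)) (htε : |t| < ε) :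
    dist (⟨u, v⟩ : ℂ) ⟨(J 1 1 - J 0 0) / 2, -J 0 1⟩ ∈
      Ioo (|(J 0 0 + J 1 1) / 2| - ε) (|(J 0 0 + J 1 1) / 2| + ε) := by
  set m := (J 0 0 + J 1 1) / 2
  have hreverse := abs_abs_sub_abs_le_abs_sub (t - m) (-m)
  rw [abs_neg, sub_neg_eq_add, sub_add_cancel,
    ← (mem_spectrum_sigma_add_iff_dist_eq hJ u v t).mp ht] at hreverse
  constructor <;> linarith [abs_le.mp hreverse]

theorem stmt18_general (J : Matrix (Fin 2) (Fin 2) ℝ) (hJ : J.IsSymm)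
    (C β : ℝ) (hβ : 0 < β)
    (μ : Measure (ℝ × ℝ))
    (hsupp : μ {p : ℝ × ℝ | p.1 ^ 2 + p.2 ^ 2 ≤ 1}ᶜ = 0)
    (hreg : ∀ S : Set (ℝ × ℝ), MeasurableSet S →
      μ S ≤ ENNReal.ofReal C * volume S ^ β)
    (ε : ℝ) (hε0 : 0 < ε) :
    μ {p : ℝ × ℝ | ∃ t ∈ Set.Ioo (-ε) ε,
        t ∈ spectrum ℝ (!![p.1, p.2; p.2, -p.1] + J)} ≤
      ENNReal.ofReal (C * (4 * Real.pi * ε) ^ β) := by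
  -- `ℝ × ℝ` is identified with `ℂ`, where the Euclidean norm and polar coordinates live.
  set w : ℂ := ⟨(J 1 1 - J 0 0) / 2, -J 0 1⟩
  set m := |(J 0 0 + J 1 1) / 2|
  set shell := {z : ℂ | dist z w ∈ Ioo (m - ε) (m + ε)} ∩ closedBall 0 1
  have hshell : MeasurableSet shell :=
    (measurableSet_Ioo.preimage (measurable_id.dist measurable_const)).inter
      measurableSet_closedBall
  set A := Complex.measurableEquivRealProd.symm ⁻¹' shell
  have hvolA : volume A ≤ ENNReal.ofReal (4 * π * ε) := by
    rw [Complex.volume_preserving_equiv_real_prod.symm.measure_preimage hshell.nullMeasurableSet]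
    refine (volume_dist_mem_Ioo_inter_closedBall_le w 0 _ _ zero_le_one).trans_eq ?_
    ring_nf
  have hsub : {p : ℝ × ℝ | ∃ t ∈ Ioo (-ε) ε, t ∈ spectrum ℝ (!![p.1, p.2; p.2, -p.1] + J)} ∩
      {p | p.1 ^ 2 + p.2 ^ 2 ≤ 1} ⊆ A := by
    rintro ⟨u, v⟩ ⟨⟨t, htε, ht⟩, huv⟩
    refine ⟨dist_mem_Ioo_of_mem_spectrum_sigma_add hJ ht (abs_lt.mpr htε), ?_⟩
    rw [mem_closedBall_zero_iff, Complex.norm_eq_sqrt_sq_add_sq, Real.sqrt_le_one]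
    exact huv
  calc _ = μ (_ ∩ {p : ℝ × ℝ | p.1 ^ 2 + p.2 ^ 2 ≤ 1}) := (measure_inter_conull hsupp).symm
    _ ≤ μ A := measure_mono hsub
    _ ≤ ENNReal.ofReal C * volume A ^ β :=
        hreg A (hshell.preimage (MeasurableEquiv.measurable _))
    _ ≤ ENNReal.ofReal C * ENNReal.ofReal (4 * π * ε) ^ β := by gcongr
    _ = ENNReal.ofReal (C * (4 * π * ε) ^ β) := by
        rw [ENNReal.ofReal_rpow_of_pos (by positivity), ← ENNReal.ofReal_mul' (by positivity)]

theorem stmt18 (J : Matrix (Fin 2) (Fin 2) ℝ) (hJ : J.IsSymm)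
    (C β : ℝ) (hC : 0 < C) (hβ : 0 < β)
    (μ : Measure (ℝ × ℝ)) [IsFiniteMeasure μ]
    (hsupp : μ {p : ℝ × ℝ | p.1 ^ 2 + p.2 ^ 2 ≤ 1}ᶜ = 0)
    (hreg : ∀ S : Set (ℝ × ℝ), MeasurableSet S →
      μ S ≤ ENNReal.ofReal C * volume S ^ β)
    (ε : ℝ) (hε0 : 0 < ε) (hε1 : ε ≤ 1) :
    μ {p : ℝ × ℝ | ∃ t ∈ Set.Ioo (-ε) ε,
        t ∈ spectrum ℝ (!![p.1, p.2; p.2, -p.1] + J)} ≤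
      ENNReal.ofReal (C * (4 * Real.pi * ε) ^ β) :=
  stmt18_general J hJ C β hβ μ hsupp hreg ε hε0
end
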